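/- arXiv:1710.10097 — 9 statements merged into one kernel-verified Lean document; each statement's English description precedes it below -/
import Mathlib

section
/- Let G be a connected graph on n vertices and m edges whose edges are assigned s×s real positive definite matrix weights, and let Q be its (matrix-weighted) incidence matrix. Then the rank of Q equals (n−1)s. -/
open Matrix
open scoped MatrixOrder

/-!
The block of `x Q` at an edge `j = (u, v)` is `(x_u - x_v) S_j` with `S_j = (√W_j)⁻¹` invertible,
so `x Q = 0` exactly when `x_u = x_v` along every edge, i.e. (the graph being connected) when `x`
is constant in the vertex coordinate. The left kernel of `Q` is therefore `s`-dimensional, and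
rank–nullity gives `rank Q = ns - s`.
-/

theorem SimpleGraph.Preconnected.apply_eq_of_forall_adj {V α : Type*} {G : SimpleGraph V}
    (hG : G.Preconnected) {f : V → α} (hf : ∀ u v, G.Adj u v → f u = f v) (u v : V) :
    f u = f v := by
  obtain ⟨w⟩ := hG u v
  induction w with
  | nil => rfl
  | cons h _ ih => exact (hf _ _ h).trans ih

theorem SimpleGraph.Preconnected.apply_eq_of_apply_fst_eq_apply_snd {V E α : Type*}
    {G : SimpleGraph V} (hG : G.Preconnected) {o : E → V × V}
    (ho_surj : ∀ e ∈ G.edgeSet, ∃ j, s((o j).1, (o j).2) = e)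
    {f : V → α} (hf : ∀ j, f (o j).1 = f (o j).2) (u v : V) : f u = f v := by
  refine hG.apply_eq_of_forall_adj (fun a b hab => ?_) u v
  obtain ⟨j, hj⟩ := ho_surj s(a, b) hab
  rcases Sym2.eq_iff.mp hj with ⟨ha, hb⟩ | ⟨ha, hb⟩
  · rw [← ha, ← hb, hf]
  · rw [← ha, ← hb, hf]

namespace Matrix

variable {V E ι K : Type*} [DecidableEq V]

def blockIncidence [Zero K] [Neg K] (o : E → V × V) (S : E → Matrix ι ι K) :
    Matrix (V × ι) (E × ι) K :=
  fun p q => if p.1 = (o q.1).1 then S q.1 p.2 q.2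
    else if p.1 = (o q.1).2 then -S q.1 p.2 q.2 else 0

variable [Fintype V] [Fintype ι]

theorem curry_vecMul_blockIncidence [Ring K] {o : E → V × V} (S : E → Matrix ι ι K)
    (ho : ∀ j, (o j).1 ≠ (o j).2) (x : V × ι → K) (j : E) :
    Function.curry (x ᵥ* blockIncidence o S) j = (x.curry (o j).1 - x.curry (o j).2) ᵥ* S j := by
  ext t
  simp only [Function.curry_apply, vecMul, dotProduct, Fintype.sum_prod_type]
  rw [Fintype.sum_eq_add (o j).1 (o j).2 (ho j)]
  · simp [blockIncidence, (ho j).symm, sub_eq_add_neg, add_mul, Finset.sum_add_distrib]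
  · rintro i ⟨h1, h2⟩
    simp [blockIncidence, h1, h2]

variable [DecidableEq ι] [Field K] {o : E → V × V} {S : E → Matrix ι ι K}

theorem vecMul_blockIncidence_eq_zero_iff (ho : ∀ j, (o j).1 ≠ (o j).2)
    (hS : ∀ j, IsUnit (S j)) (x : V × ι → K) :
    x ᵥ* blockIncidence o S = 0 ↔ ∀ j, x.curry (o j).1 = x.curry (o j).2 := by
  have hcurry :
      x ᵥ* blockIncidence o S = 0 ↔ ∀ j, Function.curry (x ᵥ* blockIncidence o S) j = 0 :=
    ⟨fun h j => by rw [h]; rfl, fun h => funext fun p => congrFun (h p.1) p.2⟩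
  simp_rw [hcurry, curry_vecMul_blockIncidence S ho,
    (vecMul_injective_iff_isUnit.mpr (hS _)).eq_iff' (zero_vecMul _), sub_eq_zero]

variable {G : SimpleGraph V} (hG : G.Connected) (ho_adj : ∀ j, G.Adj (o j).1 (o j).2)
  (ho_surj : ∀ e ∈ G.edgeSet, ∃ j, s((o j).1, (o j).2) = e) (hS : ∀ j, IsUnit (S j))
include hG ho_adj ho_surj hS

theorem ker_vecMulLinear_blockIncidence :
    LinearMap.ker (vecMulLinear (blockIncidence o S)) =
      LinearMap.range (LinearMap.funLeft K K (Prod.snd : V × ι → ι)) := by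
  ext x
  rw [LinearMap.mem_ker, vecMulLinear_apply,
    vecMul_blockIncidence_eq_zero_iff (fun j => (ho_adj j).ne) hS]
  constructor
  · intro h
    obtain ⟨v⟩ := hG.nonempty
    exact ⟨x.curry v, funext fun p =>
      congrFun (hG.preconnected.apply_eq_of_apply_fst_eq_apply_snd ho_surj h v p.1) p.2⟩
  · rintro ⟨c, rfl⟩ j
    rfl

theorem rank_blockIncidence [Fintype E] :
    (blockIncidence o S).rank = (Fintype.card V - 1) * Fintype.card ι := by
  have : Nonempty V := hG.nonempty
  have hconst :=
    LinearMap.funLeft_injective_of_surjective K K _ (Prod.snd_surjective (α := V) (β := ι))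
  have h := LinearMap.finrank_range_add_finrank_ker (vecMulLinear (blockIncidence o S))
  rw [ker_vecMulLinear_blockIncidence hG ho_adj ho_surj hS, LinearMap.finrank_range_of_inj hconst,
    ← mulVecLin_transpose, ← rank, rank_transpose] at h
  simp only [Module.finrank_fintype_fun_eq_card, Fintype.card_prod] at h
  rw [Nat.sub_mul, one_mul]
  omega

end Matrix

theorem rank_incidence_of_connected_posDef_general {n m s : ℕ}
    (G : SimpleGraph (Fin n)) (hG : G.Connected)
    (o : Fin m → Fin n × Fin n)
    (ho_adj : ∀ j, G.Adj (o j).1 (o j).2)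
    (ho_surj : ∀ e ∈ G.edgeSet, ∃ j, Sym2.mk (o j).1 (o j).2 = e)
    (W : Fin m → Matrix (Fin s) (Fin s) ℝ)
    (hW : ∀ j, (W j).PosDef)
    (Q : Matrix (Fin n × Fin s) (Fin m × Fin s) ℝ)
    (hQ : ∀ p q, Q p q =
      if p.1 = (o q.1).1 then ((CFC.sqrt (W q.1))⁻¹) p.2 q.2
      else if p.1 = (o q.1).2 then -(((CFC.sqrt (W q.1))⁻¹) p.2 q.2)
      else 0) :
    Q.rank = (n - 1) * s := by
  have hS : ∀ j, IsUnit (CFC.sqrt (W j))⁻¹ := fun j => isUnit_nonsing_inv_iff.mpr <|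
    CFC.isUnit_sqrt_iff_isStrictlyPositive.mpr (hW j).isStrictlyPositive
  have hQ_eq : Q = blockIncidence o fun j => (CFC.sqrt (W j))⁻¹ := Matrix.ext hQ
  rw [hQ_eq, rank_blockIncidence hG ho_adj ho_surj hS, Fintype.card_fin, Fintype.card_fin]

/-- Let `G` be a connected graph on `n` vertices and `m` edges whose edges are
assigned `s × s` real positive definite matrix weights, and let `Q` be its matrix-weighted
incidence matrix (built from the inverses of the positive definite square roots of the weights,
with respect to a chosen orientation `o` enumerating the edges). Then `rank Q = (n-1)s`. -/
theorem rank_incidence_of_connected_posDef {n m s : ℕ}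
    (G : SimpleGraph (Fin n)) [DecidableRel G.Adj] (hG : G.Connected)
    (o : Fin m → Fin n × Fin n)
    (ho_adj : ∀ j, G.Adj (o j).1 (o j).2)
    (ho_inj : Function.Injective fun j => Sym2.mk (o j).1 (o j).2)
    (ho_surj : ∀ e ∈ G.edgeSet, ∃ j, Sym2.mk (o j).1 (o j).2 = e)
    (W : Fin m → Matrix (Fin s) (Fin s) ℝ)
    (hW : ∀ j, (W j).PosDef)
    (Q : Matrix (Fin n × Fin s) (Fin m × Fin s) ℝ)
    (hQ : ∀ p q, Q p q =
      if p.1 = (o q.1).1 then ((CFC.sqrt (W q.1))⁻¹) p.2 q.2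
      else if p.1 = (o q.1).2 then -(((CFC.sqrt (W q.1))⁻¹) p.2 q.2)
      else 0) :
    Q.rank = (n - 1) * s :=
  rank_incidence_of_connected_posDef_general G hG o ho_adj ho_surj W hW Q hQ
end

section
/- Let G be a connected graph on n vertices whose edges are assigned s×s real positive definite matrix weights, and let L be its (matrix-weighted) Laplacian matrix formed from the inverses of the weights. Then the rank of L equals (n−1)s. -/
/-!
Writing `x_i ∈ ℝ^s` for the blocks of `x`, one has
`2 xᵀ L x = ∑_{i ~ k} (x_i - x_k)ᵀ W_{ik}⁻¹ (x_i - x_k)`, a sum of positive definite forms.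
Hence `L x = 0` forces `x_i = x_k` along every edge, so on a connected graph the kernel of `L`
consists of the vectors with all blocks equal, has dimension `s`, and rank-nullity gives
`rank L = ns - s`.
-/

open Matrix

/-- Matrix-weighted Laplacian: each edge weight is replaced by its inverse. -/
noncomputable def matLap {n s : ℕ} (G : SimpleGraph (Fin n)) [DecidableRel G.Adj]
    (w : Sym2 (Fin n) → Matrix (Fin s) (Fin s) ℝ) :
    Matrix (Fin n × Fin s) (Fin n × Fin s) ℝ :=
  Matrix.of fun p q =>
    if p.1 = q.1 then (∑ k ∈ G.neighborFinset p.1, (w s(p.1, k))⁻¹) p.2 q.2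
    else if G.Adj p.1 q.1 then (-(w s(p.1, q.1))⁻¹) p.2 q.2
    else 0

open Function

namespace SimpleGraph

variable {V : Type*} (G : SimpleGraph V)

theorem sum_sum_neighborFinset_comm [Fintype V] [DecidableRel G.Adj] {M : Type*}
    [AddCommMonoid M] (f : V → V → M) :
    ∑ i, ∑ k ∈ G.neighborFinset i, f i k = ∑ i, ∑ k ∈ G.neighborFinset i, f k i := by
  simp only [neighborFinset_eq_filter, Finset.sum_filter]
  rw [Finset.sum_comm]
  simp only [G.adj_comm]

variable {G}

theorem Preconnected.eq_of_forall_adj {α : Type*} (hG : G.Preconnected) {f : V → α}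
    (hf : ∀ u v, G.Adj u v → f u = f v) (u v : V) : f u = f v := by
  obtain ⟨p⟩ := hG u v
  induction p with
  | nil => rfl
  | cons h _ ih => exact (hf _ _ h).trans ih

end SimpleGraph

section matLap

variable {n s : ℕ} (G : SimpleGraph (Fin n)) [DecidableRel G.Adj]
  (w : Sym2 (Fin n) → Matrix (Fin s) (Fin s) ℝ)

theorem submatrix_matLap (i j : Fin n) :
    (matLap G w).submatrix (Prod.mk i) (Prod.mk j) =
      if i = j then ∑ k ∈ G.neighborFinset i, (w s(i, k))⁻¹
      else if G.Adj i j then -(w s(i, j))⁻¹ else 0 := by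
  ext a b
  split_ifs with hij
  · subst hij; simp [matLap]
  all_goals simp_all [matLap]

theorem curry_matLap_mulVec (x : Fin n × Fin s → ℝ) (i : Fin n) :
    curry (matLap G w *ᵥ x) i =
      ∑ k ∈ G.neighborFinset i, (w s(i, k))⁻¹ *ᵥ (curry x i - curry x k) := by
  ext a
  have hblock : ∀ j, ((matLap G w).submatrix (Prod.mk i) (Prod.mk j) *ᵥ curry x j) a =
      (if i = j then ((∑ k ∈ G.neighborFinset i, (w s(i, k))⁻¹) *ᵥ curry x i) a else 0) -
        if G.Adj i j then ((w s(i, j))⁻¹ *ᵥ curry x j) a else 0 := by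
    intro j
    rw [submatrix_matLap]
    split_ifs <;> simp_all [neg_mulVec]
  calc curry (matLap G w *ᵥ x) i a
      = ∑ j, ((matLap G w).submatrix (Prod.mk i) (Prod.mk j) *ᵥ curry x j) a := by
        simp only [curry, mulVec, dotProduct, Fintype.sum_prod_type, submatrix_apply]
    _ = ((∑ k ∈ G.neighborFinset i, (w s(i, k))⁻¹) *ᵥ curry x i) a -
          ∑ k ∈ G.neighborFinset i, ((w s(i, k))⁻¹ *ᵥ curry x k) a := by
        simp only [hblock, Finset.sum_sub_distrib, Finset.sum_ite_eq, Finset.mem_univ, if_true,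
          G.neighborFinset_eq_filter, Finset.sum_filter]
    _ = _ := by
        simp only [sum_mulVec, mulVec_sub, Finset.sum_sub_distrib, Finset.sum_apply, Pi.sub_apply]

theorem dotProduct_matLap_mulVec (x : Fin n × Fin s → ℝ) :
    x ⬝ᵥ (matLap G w *ᵥ x) =
      ∑ i, ∑ k ∈ G.neighborFinset i, curry x i ⬝ᵥ ((w s(i, k))⁻¹ *ᵥ (curry x i - curry x k)) := by
  rw [dotProduct, Fintype.sum_prod_type]
  refine Finset.sum_congr rfl fun i _ => ?_
  rw [← dotProduct_sum, ← curry_matLap_mulVec]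
  rfl

theorem two_mul_dotProduct_matLap_mulVec (x : Fin n × Fin s → ℝ) :
    2 * (x ⬝ᵥ (matLap G w *ᵥ x)) =
      ∑ i, ∑ k ∈ G.neighborFinset i,
        (curry x i - curry x k) ⬝ᵥ ((w s(i, k))⁻¹ *ᵥ (curry x i - curry x k)) := by
  let f i k := curry x i ⬝ᵥ ((w s(i, k))⁻¹ *ᵥ (curry x i - curry x k))
  calc 2 * (x ⬝ᵥ (matLap G w *ᵥ x))
      = ∑ i, ∑ k ∈ G.neighborFinset i, f i k + ∑ i, ∑ k ∈ G.neighborFinset i, f k i := by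
        rw [two_mul, dotProduct_matLap_mulVec, G.sum_sum_neighborFinset_comm f]
    _ = _ := by
        simp only [f, ← Finset.sum_add_distrib]
        refine Finset.sum_congr rfl fun i _ => Finset.sum_congr rfl fun k _ => ?_
        rw [Sym2.eq_swap, ← neg_sub (curry x i), mulVec_neg, dotProduct_neg, sub_dotProduct]
        exact (sub_eq_add_neg _ _).symm

variable {G w}

theorem matLap_mulVec_eq_zero_iff (hw : ∀ e ∈ G.edgeSet, (w e).PosDef)
    (x : Fin n × Fin s → ℝ) :
    matLap G w *ᵥ x = 0 ↔ ∀ i k, G.Adj i k → curry x i = curry x k := by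
  have hpd : ∀ i k, G.Adj i k → ((w s(i, k))⁻¹).PosDef := fun i k hik => (hw _ hik).inv
  constructor
  · intro hx i k hik
    have hnonneg : ∀ i, ∀ k ∈ G.neighborFinset i,
        0 ≤ (curry x i - curry x k) ⬝ᵥ ((w s(i, k))⁻¹ *ᵥ (curry x i - curry x k)) :=
      fun i k hk => by
        simpa using (hpd i k ((G.mem_neighborFinset i k).1 hk)).posSemidef.dotProduct_mulVec_nonneg
          (curry x i - curry x k)
    have hsum := two_mul_dotProduct_matLap_mulVec G w x
    rw [hx, dotProduct_zero, mul_zero, eq_comm, Finset.sum_eq_zero_iff_of_nonneg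
      fun i _ => Finset.sum_nonneg (hnonneg i)] at hsum
    have hq := (Finset.sum_eq_zero_iff_of_nonneg (hnonneg i)).1 (hsum i (Finset.mem_univ i)) k
      ((G.mem_neighborFinset i k).2 hik)
    by_contra hne
    simpa [hq] using (hpd i k hik).dotProduct_mulVec_pos (sub_ne_zero.2 hne)
  · intro h
    ext ⟨i, a⟩
    rw [← curry_apply (matLap G w *ᵥ x), curry_matLap_mulVec, Finset.sum_eq_zero fun k hk => by
      rw [h i k ((G.mem_neighborFinset i k).1 hk), sub_self, mulVec_zero]]
    rfl

theorem ker_mulVecLin_matLap (hG : G.Connected) (hw : ∀ e ∈ G.edgeSet, (w e).PosDef) :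
    LinearMap.ker (matLap G w).mulVecLin =
      LinearMap.range (LinearMap.funLeft ℝ ℝ (Prod.snd : Fin n × Fin s → Fin s)) := by
  ext x
  rw [LinearMap.mem_ker, mulVecLin_apply, matLap_mulVec_eq_zero_iff hw, LinearMap.mem_range]
  constructor
  · intro h
    obtain ⟨i₀⟩ := hG.nonempty
    exact ⟨curry x i₀, funext fun p => congrFun (hG.preconnected.eq_of_forall_adj h i₀ p.1) p.2⟩
  · rintro ⟨c, rfl⟩ i k _
    rfl

theorem finrank_ker_mulVecLin_matLap (hG : G.Connected) (hw : ∀ e ∈ G.edgeSet, (w e).PosDef) :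
    Module.finrank ℝ (LinearMap.ker (matLap G w).mulVecLin) = s := by
  have : Nonempty (Fin n) := hG.nonempty
  rw [ker_mulVecLin_matLap hG hw, LinearMap.finrank_range_of_inj
    (LinearMap.funLeft_injective_of_surjective _ _ _ Prod.snd_surjective), Module.finrank_fin_fun]

end matLap

/-- Let `G` be a connected graph on `n` vertices whose edges are assigned
`s × s` real positive definite matrix weights, and let `L` be its matrix-weighted Laplacian
formed from the inverses of the weights. Then `rank L = (n-1)s`. -/
theorem rank_matLap_of_connected_posDef {n s : ℕ}
    (G : SimpleGraph (Fin n)) [DecidableRel G.Adj] (hG : G.Connected)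
    (w : Sym2 (Fin n) → Matrix (Fin s) (Fin s) ℝ)
    (hw : ∀ e ∈ G.edgeSet, (w e).PosDef) :
    (matLap G w).rank = (n - 1) * s := by
  have hdim := LinearMap.finrank_range_add_finrank_ker (matLap G w).mulVecLin
  rw [finrank_ker_mulVecLin_matLap hG hw, Module.finrank_fintype_fun_eq_card, Fintype.card_prod,
    Fintype.card_fin, Fintype.card_fin] at hdim
  rw [Nat.sub_mul, one_mul]
  exact Nat.eq_sub_of_add_eq hdim
end

section
/- Let T be a tree on n vertices whose edges are assigned s×s real invertible (nonsingular) matrix weights, and let L be its Laplacian matrix formed from the inverses of the weights. Then the rank of L equals (n−1)s. -/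
/-!
Orient each edge of `T` and let `B` be the oriented incidence matrix tensored with `I_s`.
Then `L = Bᵀ D B` with `D` the block diagonal matrix of the inverted weights. For a forest,
the rows of the incidence matrix are independent: the indicator of the component of one end
of `e` in `T - e` pairs to `δ_{ef}` with the row of `f`, giving a left inverse of `Bᵀ`. Hence
`rank L = rank (D B) = rank B`, which is the number of rows of `B`, namely `(n - 1) s`.
-/

open Matrix

open Finset
open scoped Kronecker

namespace Matrix

section Rank

variable {m n o R : Type*} [Fintype m] [Fintype n] [Fintype o] [DecidableEq n] [CommSemiring R]
  [StrongRankCondition R]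

theorem rank_mul_eq_right_of_mul_eq_one {A : Matrix m n R} {P : Matrix n m R} (h : P * A = 1)
    (B : Matrix n o R) : (A * B).rank = B.rank :=
  le_antisymm (rank_mul_le_right A B) <| by
    simpa [← Matrix.mul_assoc, h] using rank_mul_le_right P (A * B)

theorem rank_eq_card_width_of_mul_eq_one {A : Matrix m n R} {P : Matrix n m R} (h : P * A = 1) :
    A.rank = Fintype.card n :=
  le_antisymm A.rank_le_card_width <| by simpa [h] using rank_mul_le_right P A

end Rank

variable {m n ι R : Type*} [Fintype m] [Fintype ι] [DecidableEq m] [DecidableEq ι] [CommRing R]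

theorem kronecker_one_transpose_mul_blockDiagonal_mul_apply (A : Matrix m n R)
    (W : m → Matrix ι ι R) (v u : n) (l k : ι) :
    ((A ⊗ₖ (1 : Matrix ι ι R))ᵀ * reindex (.prodComm ι m) (.prodComm ι m) (blockDiagonal W) *
      (A ⊗ₖ (1 : Matrix ι ι R))) (v, l) (u, k) = ∑ e, A e v * A e u * W e l k := by
  simp [mul_apply, Fintype.sum_prod_type, blockDiagonal_apply, one_apply, mul_right_comm]

end Matrix

lemma Sym2.mk_out {α : Type*} (e : Sym2 α) : s(e.out.1, e.out.2) = e := e.out_eq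

namespace SimpleGraph

variable {V R : Type*} {G : SimpleGraph V}

lemma adj_out_of_mem_edgeSet {e : Sym2 V} (he : e ∈ G.edgeSet) : G.Adj e.out.1 e.out.2 := by
  rwa [← mem_edgeSet, e.mk_out]

section Incidence

variable [DecidableEq V] [Fintype V] [DecidableRel G.Adj]

lemma incidenceFinset_eq_image_neighborFinset (v : V) :
    G.incidenceFinset v = (G.neighborFinset v).image (s(v, ·)) := by
  ext e
  induction e using Sym2.ind with
  | h a b =>
    simp only [mem_incidenceFinset, incidenceSet, Set.mem_ofPred_eq, mem_edgeSet, Sym2.mem_iff,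
      mem_image, mem_neighborFinset, Sym2.eq_iff]
    grind [G.adj_symm]

lemma sum_edgeSet_ite_mem {M : Type*} [AddCommMonoid M] (f : Sym2 V → M) (v : V) :
    ∑ e : G.edgeSet, (if v ∈ e.1 then f e else 0) = ∑ k ∈ G.neighborFinset v, f s(v, k) := by
  rw [← Finset.sum_subtype G.edgeFinset (fun _ => mem_edgeFinset) (fun e => if v ∈ e then f e else 0),
    ← Finset.sum_filter, ← incidenceFinset_eq_filter, incidenceFinset_eq_image_neighborFinset,
    Finset.sum_image fun _ _ _ _ => Sym2.congr_right.mp]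

end Incidence

variable [DecidableEq V]

variable (G) in
noncomputable def orientedIncMatrix (R : Type*) [Ring R] : Matrix G.edgeSet V R :=
  of fun e v => if v = e.1.out.1 then 1 else if v = e.1.out.2 then -1 else 0

variable (G R) in
open scoped Classical in
noncomputable def cutMatrix [Ring R] : Matrix G.edgeSet V R :=
  of fun e v => if (G.deleteEdges {e.1}).Reachable v e.1.out.1 then 1 else 0

variable [CommRing R]

lemma orientedIncMatrix_apply_of_notMem {e : G.edgeSet} {v : V} (hv : v ∉ e.1) :
    G.orientedIncMatrix R e v = 0 := by
  have h₁ : v ≠ e.1.out.1 := fun h => hv (h ▸ e.1.out_fst_mem)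
  have h₂ : v ≠ e.1.out.2 := fun h => hv (h ▸ e.1.out_snd_mem)
  simp [orientedIncMatrix, h₁, h₂]

lemma orientedIncMatrix_apply_mul_self (e : G.edgeSet) (v : V) :
    G.orientedIncMatrix R e v * G.orientedIncMatrix R e v = if v ∈ e.1 then 1 else 0 := by
  have hne := (adj_out_of_mem_edgeSet e.2).ne
  have hmem : v ∈ e.1 ↔ v = e.1.out.1 ∨ v = e.1.out.2 := by rw [← Sym2.mem_iff, e.1.mk_out]
  by_cases h₁ : v = e.1.out.1
  · subst h₁; simp [orientedIncMatrix, hmem]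
  · by_cases h₂ : v = e.1.out.2
    · subst h₂; simp [orientedIncMatrix, hmem, hne.symm]
    · simp [orientedIncMatrix, hmem, h₁, h₂]

lemma orientedIncMatrix_apply_mul_apply_of_ne {u v : V} (huv : u ≠ v) (e : G.edgeSet) :
    G.orientedIncMatrix R e u * G.orientedIncMatrix R e v = if e.1 = s(u, v) then -1 else 0 := by
  by_cases he : e.1 = s(u, v)
  · have hne := (adj_out_of_mem_edgeSet e.2).ne
    rw [if_pos he]
    rcases Sym2.eq_iff.mp (e.1.mk_out.trans he) with ⟨h₁, h₂⟩ | ⟨h₁, h₂⟩ <;>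
      simp [orientedIncMatrix, ← h₁, ← h₂, hne.symm]
  · rw [if_neg he]
    rcases not_and_or.mp (mt (Sym2.mem_and_mem_iff huv).mp he) with hu | hv
    · rw [orientedIncMatrix_apply_of_notMem hu, zero_mul]
    · rw [orientedIncMatrix_apply_of_notMem hv, mul_zero]

lemma sum_orientedIncMatrix_mul_mul [Fintype V] [DecidableRel G.Adj] (f : Sym2 V → R)
    (u v : V) :
    ∑ e, G.orientedIncMatrix R e u * G.orientedIncMatrix R e v * f e =
      if u = v then ∑ k ∈ G.neighborFinset u, f s(u, k)
      else if G.Adj u v then -f s(u, v) else 0 := by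
  split_ifs with huv hadj
  · subst huv
    simp_rw [orientedIncMatrix_apply_mul_self, ite_mul, one_mul, zero_mul]
    exact sum_edgeSet_ite_mem f u
  all_goals simp_rw [orientedIncMatrix_apply_mul_apply_of_ne huv, ite_mul, neg_one_mul, zero_mul]
  · rw [Fintype.sum_eq_single ⟨s(u, v), hadj⟩ fun e he => if_neg (mt Subtype.ext he)]
    exact if_pos rfl
  · refine Finset.sum_eq_zero fun e _ => if_neg fun he => hadj ?_
    exact G.mem_edgeSet.mp (he ▸ e.2)

lemma orientedIncMatrix_mulVec [Fintype V] (y : V → R) (e : G.edgeSet) :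
    (G.orientedIncMatrix R *ᵥ y) e = y e.1.out.1 - y e.1.out.2 := by
  have hne := (adj_out_of_mem_edgeSet e.2).ne
  simp [orientedIncMatrix, mulVec, dotProduct, ite_mul, Finset.sum_ite, Finset.filter_eq',
    Finset.filter_ne', hne.symm, sub_eq_add_neg]

lemma cutMatrix_apply_out_fst_sub_out_snd (hG : G.IsAcyclic) (e f : G.edgeSet) :
    G.cutMatrix R e f.1.out.1 - G.cutMatrix R e f.1.out.2 = if e = f then 1 else 0 := by
  split_ifs with hef
  · subst hef
    have hbridge : ¬ (G.deleteEdges {e.1}).Reachable e.1.out.2 e.1.out.1 := by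
      have := isAcyclic_iff_forall_isBridge.mp hG e.2
      rw [← e.1.mk_out, isBridge_iff, e.1.mk_out] at this
      exact fun h => this h.symm
    simp [cutMatrix, hbridge]
  · have hadj : (G.deleteEdges {e.1}).Adj f.1.out.1 f.1.out.2 := by
      rw [deleteEdges_adj, f.1.mk_out]
      exact ⟨adj_out_of_mem_edgeSet f.2, fun h => hef (Subtype.ext h).symm⟩
    have hiff : (G.deleteEdges {e.1}).Reachable f.1.out.1 e.1.out.1 ↔
        (G.deleteEdges {e.1}).Reachable f.1.out.2 e.1.out.1 :=
      ⟨hadj.reachable.symm.trans, hadj.reachable.trans⟩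
    simp only [cutMatrix, of_apply]
    split_ifs <;> simp_all

lemma cutMatrix_mul_transpose_orientedIncMatrix [Fintype V] (hG : G.IsAcyclic) :
    G.cutMatrix R * (G.orientedIncMatrix R)ᵀ = 1 := by
  ext e f
  rw [mul_apply, one_apply, ← cutMatrix_apply_out_fst_sub_out_snd hG, ← orientedIncMatrix_mulVec]
  simp [mulVec, dotProduct, mul_comm]

end SimpleGraph

open SimpleGraph

theorem matLap_eq_transpose_mul_mul {n s : ℕ} (G : SimpleGraph (Fin n)) [DecidableRel G.Adj]
    (w : Sym2 (Fin n) → Matrix (Fin s) (Fin s) ℝ) :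
    matLap G w = (G.orientedIncMatrix ℝ ⊗ₖ (1 : Matrix (Fin s) (Fin s) ℝ))ᵀ *
      reindex (.prodComm _ _) (.prodComm _ _) (blockDiagonal fun e : G.edgeSet => (w e)⁻¹) *
      (G.orientedIncMatrix ℝ ⊗ₖ (1 : Matrix (Fin s) (Fin s) ℝ)) := by
  ext ⟨v, l⟩ ⟨u, k⟩
  rw [kronecker_one_transpose_mul_blockDiagonal_mul_apply,
    sum_orientedIncMatrix_mul_mul (fun e => (w e)⁻¹ l k)]
  simp only [matLap, of_apply]
  split_ifs <;> simp [Matrix.sum_apply]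

/-- Let `T` be a tree on `n` vertices whose edges are assigned `s × s` real
invertible matrix weights, and let `L` be its Laplacian formed from the inverses of the
weights. Then `rank L = (n-1)s`. -/
theorem rank_matLap_of_tree_invertible {n s : ℕ}
    (G : SimpleGraph (Fin n)) [DecidableRel G.Adj] (hT : G.IsTree)
    (w : Sym2 (Fin n) → Matrix (Fin s) (Fin s) ℝ)
    (hw : ∀ e ∈ G.edgeSet, IsUnit (w e)) :
    (matLap G w).rank = (n - 1) * s := by
  set B := G.orientedIncMatrix ℝ ⊗ₖ (1 : Matrix (Fin s) (Fin s) ℝ)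
  have hB : (G.cutMatrix ℝ ⊗ₖ (1 : Matrix (Fin s) (Fin s) ℝ)) * Bᵀ = 1 := by
    rw [← kroneckerMap_transpose, transpose_one, ← mul_kronecker_mul,
      cutMatrix_mul_transpose_orientedIncMatrix hT.isAcyclic, one_mul, one_kronecker_one]
  have hD : IsUnit (reindex (.prodComm _ _) (.prodComm _ _)
      (blockDiagonal fun e : G.edgeSet => (w e)⁻¹)).det := by
    rw [det_reindex_self, det_blockDiagonal, IsUnit.prod_univ_iff]
    exact fun e => isUnit_nonsing_inv_det _ ((isUnit_iff_isUnit_det _).mp (hw e e.2))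
  have hcard := hT.card_edgeFinset
  rw [edgeFinset_card, Fintype.card_fin] at hcard
  rw [matLap_eq_transpose_mul_mul, Matrix.mul_assoc, rank_mul_eq_right_of_mul_eq_one hB,
    rank_mul_eq_right_of_isUnit_det _ _ hD, ← rank_transpose, rank_eq_card_width_of_mul_eq_one hB,
    Fintype.card_prod, Fintype.card_fin, Nat.eq_sub_of_add_eq hcard]
end

section
/- Let G be a connected graph on n vertices and let s ≥ 1. Then G is a tree if and only if for every assignment of s×s real invertible matrix weights to the edges of G, the rank of the associated Laplacian matrix L (formed from the inverses of the weights) equals (n−1)s. -/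
open Matrix

/-!
In a tree every edge `ij` is a bridge. If `L x = 0`, summing the block rows of `L x` over the side
of the bridge containing `i` cancels every other edge and leaves `W⁻¹ (x_i - x_j) = 0`. Hence kernel
vectors are blockwise constant, the kernel has dimension `s` and the rank is `(n - 1) s`.

Otherwise some edge `uv` is not a bridge, so `D = G - uv` is connected and the ordinary Laplacian
equation `L_D y = e_u - e_v` has a solution, with `d = y_u - y_v ≠ 0` because `L_D` is positive
semidefinite. Giving `uv` the (negative) conductance `-1/d` and every other edge conductance `1`
makes `y` harmonic on `G`. With the weights `c_e⁻¹ I` every vector `p ⊗ 1 + y ⊗ q` is in the kernel,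
which therefore has dimension at least `2 s`.
-/

open Finset SimpleGraph Function

theorem sum_sum_filter_mem_eq_zero_of_antisymm {V : Type*} [Fintype V] [DecidableEq V]
    (H : SimpleGraph V) [DecidableRel H.Adj] (S : Finset V) (F : V → V → ℝ)
    (hF : ∀ a k, H.Adj a k → F k a = -F a k) :
    ∑ a ∈ S, ∑ k ∈ (H.neighborFinset a).filter (· ∈ S), F a k = 0 := by
  have hfilter : ∀ a, (H.neighborFinset a).filter (· ∈ S) = S.filter (H.Adj a) := fun a => by
    ext k; simp [and_comm]
  simp_rw [hfilter, Finset.sum_filter]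
  have hswap := Finset.sum_comm (s := S) (t := S) (f := fun a k => if H.Adj a k then F a k else 0)
  have hneg : ∑ k ∈ S, ∑ a ∈ S, (if H.Adj a k then F a k else 0) =
      -∑ k ∈ S, ∑ a ∈ S, (if H.Adj k a then F k a else 0) := by
    simp only [← Finset.sum_neg_distrib]
    refine Finset.sum_congr rfl fun k _ => Finset.sum_congr rfl fun a _ => ?_
    by_cases h : H.Adj a k
    · simp [h, h.symm, hF a k h]
    · simp [h, show ¬H.Adj k a from fun h' => h h'.symm]
  linarith

theorem SimpleGraph.Reachable.eq_of_forall_adj {V α : Type*} {H : SimpleGraph V} {f : V → α}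
    (hf : ∀ a b, H.Adj a b → f a = f b) {a b : V} (hab : H.Reachable a b) : f a = f b := by
  obtain ⟨p⟩ := hab
  induction p with
  | nil => rfl
  | cons hadj _ ih => exact (hf _ _ hadj).trans ih

theorem exists_lapMatrix_mulVec_eq {V : Type*} [Fintype V] [DecidableEq V] {D : SimpleGraph V}
    [DecidableRel D.Adj] (hD : D.Connected) {r : V → ℝ} (hr : ∑ i, r i = 0) :
    ∃ y, D.lapMatrix ℝ *ᵥ y = r := by
  let φ := Fintype.linearCombination ℝ (fun _ : V => (1 : ℝ))
  have hφ : ∀ z, φ z = ∑ i, z i := by simp [φ, Fintype.linearCombination_apply]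
  have hle : LinearMap.range (D.lapMatrix ℝ).toLin' ≤ LinearMap.ker φ := by
    rintro _ ⟨y, rfl⟩
    rw [LinearMap.mem_ker, hφ, toLin'_apply]
    calc ∑ i, (D.lapMatrix ℝ *ᵥ y) i = (fun _ => 1) ⬝ᵥ (D.lapMatrix ℝ *ᵥ y) := by
          simp [dotProduct]
      _ = (D.lapMatrix ℝ *ᵥ fun _ => 1) ⬝ᵥ y := by
          rw [dotProduct_mulVec, ← mulVec_transpose, isSymm_lapMatrix]
      _ = 0 := by rw [lapMatrix_mulVec_const_eq_zero, zero_dotProduct]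
  obtain ⟨i₀⟩ := hD.nonempty
  have hrange :
      Module.finrank ℝ (LinearMap.range (D.lapMatrix ℝ).toLin') = Fintype.card V - 1 := by
    have hcomp : Fintype.card D.ConnectedComponent = 1 :=
      have := hD.preconnected.subsingleton_connectedComponent
      Fintype.card_eq_one_iff.mpr ⟨D.connectedComponentMk i₀, fun _ => Subsingleton.elim _ _⟩
    have := LinearMap.finrank_range_add_finrank_ker (D.lapMatrix ℝ).toLin'
    rw [← card_connectedComponent_eq_finrank_ker_toLin'_lapMatrix, hcomp] at this
    simp only [Module.finrank_fintype_fun_eq_card] at this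
    omega
  have hkerφ : Module.finrank ℝ (LinearMap.ker φ) = Fintype.card V - 1 := by
    have hsurj : LinearMap.range φ = ⊤ := LinearMap.range_eq_top.mpr fun a =>
      ⟨Pi.single i₀ a, by simp [hφ]⟩
    have := LinearMap.finrank_range_add_finrank_ker φ
    rw [hsurj, finrank_top] at this
    simp only [Module.finrank_fintype_fun_eq_card, Module.finrank_self] at this
    omega
  have hmem : r ∈ LinearMap.range (D.lapMatrix ℝ).toLin' := by
    rw [Submodule.eq_of_le_of_finrank_eq hle (hrange.trans hkerφ.symm), LinearMap.mem_ker, hφ]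
    exact hr
  exact hmem

theorem sum_neighborFinset_ite_mul_sub {V : Type*} [Fintype V] [DecidableEq V]
    {G : SimpleGraph V} [DecidableRel G.Adj] {u v : V}
    [DecidableRel (G.deleteEdges {s(u, v)}).Adj] (huv : G.Adj u v) (t : ℝ) (y : V → ℝ) (i : V) :
    ∑ k ∈ G.neighborFinset i, (if s(i, k) = s(u, v) then t else 1) * (y i - y k) =
      ((G.deleteEdges {s(u, v)}).lapMatrix ℝ *ᵥ y) i +
        t * (y u - y v) * (Pi.single u 1 - Pi.single v 1 : V → ℝ) i := by
  have hdel : (G.neighborFinset i).filter (fun k => ¬s(i, k) = s(u, v)) =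
      (G.deleteEdges {s(u, v)}).neighborFinset i := by
    ext k
    simp [deleteEdges_adj]
  have hedge : ∑ k ∈ (G.neighborFinset i).filter (fun k => s(i, k) = s(u, v)), t * (y i - y k) =
      t * (y u - y v) * (Pi.single u 1 - Pi.single v 1 : V → ℝ) i := by
    rcases eq_or_ne i u with rfl | hiu
    · have : (G.neighborFinset i).filter (fun k => s(i, k) = s(i, v)) = {v} := by
        ext k; simpa [huv.ne] using fun hk => hk ▸ huv
      rw [this, Finset.sum_singleton]
      simp [huv.ne']
    rcases eq_or_ne i v with rfl | hiv
    · have : (G.neighborFinset i).filter (fun k => s(i, k) = s(u, i)) = {u} := by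
        ext k; simpa [hiu] using fun hk => hk ▸ huv.symm
      rw [this, Finset.sum_singleton]
      simp [hiu]
      ring
    · simp [hiu, hiv]
  simp only [ite_mul, one_mul, Finset.sum_ite, hdel, hedge, lapMatrix_mulVec_apply,
    Finset.sum_sub_distrib, Finset.sum_const, card_neighborFinset_eq_degree, nsmul_eq_mul]
  ring

theorem exists_signed_harmonic_of_not_isBridge {V : Type*} [Fintype V] [DecidableEq V]
    {G : SimpleGraph V} [DecidableRel G.Adj] (hG : G.Connected) {u v : V} (huv : G.Adj u v)
    (hb : ¬G.IsBridge s(u, v)) :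
    ∃ t ≠ 0, ∃ y : V → ℝ, y u ≠ y v ∧
      ∀ i, ∑ k ∈ G.neighborFinset i, (if s(i, k) = s(u, v) then t else 1) * (y i - y k) = 0 := by
  classical
  set r : V → ℝ := Pi.single u 1 - Pi.single v 1
  obtain ⟨y, hy⟩ := exists_lapMatrix_mulVec_eq (hG.connected_delete_edge_of_not_isBridge hb)
    (r := r) (by simp [r, Finset.sum_sub_distrib])
  have hd : y u - y v ≠ 0 := by
    intro h
    have henergy : star y ⬝ᵥ ((G.deleteEdges {s(u, v)}).lapMatrix ℝ *ᵥ y) = 0 := by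
      rw [star_trivial, hy]
      simp [r, dotProduct_sub, h]
    rw [(posSemidef_lapMatrix ℝ _).dotProduct_mulVec_zero_iff, hy] at henergy
    simpa [r, huv.ne] using congrFun henergy u
  refine ⟨-(y u - y v)⁻¹, by simpa using hd, y, sub_ne_zero.mp hd, fun i => ?_⟩
  rw [sum_neighborFinset_ite_mul_sub huv, hy]
  field_simp
  ring

theorem inv_inv_smul_one {m K : Type*} [Fintype m] [DecidableEq m] [Field K] (c : K) :
    (c⁻¹ • (1 : Matrix m m K))⁻¹ = c • 1 := by
  rcases eq_or_ne c 0 with rfl | hc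
  · simp
  · exact inv_eq_left_inv (by rw [smul_mul_smul_comm, mul_inv_cancel₀ hc, one_mul, one_smul])

noncomputable def scalarWeights {n : ℕ} (s : ℕ) (c : Sym2 (Fin n) → ℝ) :
    Sym2 (Fin n) → Matrix (Fin s) (Fin s) ℝ :=
  fun e => (c e)⁻¹ • 1

theorem isUnit_scalarWeights {n s : ℕ} {c : Sym2 (Fin n) → ℝ} {e : Sym2 (Fin n)} (hc : c e ≠ 0) :
    IsUnit (scalarWeights s c e) := by
  rw [scalarWeights, isUnit_iff_isUnit_det, det_smul, det_one, mul_one]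
  exact (isUnit_iff_ne_zero.mpr (inv_ne_zero hc)).pow _

section

variable {n s : ℕ} (G : SimpleGraph (Fin n)) [DecidableRel G.Adj]

section

variable (w : Sym2 (Fin n) → Matrix (Fin s) (Fin s) ℝ)

theorem matLap_mulVec_apply (x : Fin n × Fin s → ℝ) (i : Fin n) (σ : Fin s) :
    (matLap G w *ᵥ x) (i, σ) =
      ∑ k ∈ G.neighborFinset i, ((w s(i, k))⁻¹ *ᵥ (curry x i - curry x k)) σ := by
  have hblock : ∀ j, ∑ τ, matLap G w (i, σ) (j, τ) * x (j, τ) =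
      (if i = j then ∑ k ∈ G.neighborFinset i, ((w s(i, k))⁻¹ *ᵥ curry x i) σ else 0) -
        if G.Adj i j then ((w s(i, j))⁻¹ *ᵥ curry x j) σ else 0 := by
    intro j
    by_cases hij : i = j
    · subst hij
      simp [matLap, mulVec, dotProduct, Matrix.sum_apply, Finset.sum_mul,
        Finset.sum_comm (s := Finset.univ)]
    · by_cases hadj : G.Adj i j <;> simp [matLap, hij, hadj, mulVec, dotProduct]
  simp only [mulVec_sub, Pi.sub_apply, Finset.sum_sub_distrib]
  rw [mulVec, dotProduct, Fintype.sum_prod_type]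
  simp only [hblock, Finset.sum_sub_distrib, Finset.sum_ite_eq, Finset.mem_univ, if_true,
    ← Finset.sum_filter, ← neighborFinset_eq_filter]

theorem sum_matLap_mulVec_eq_sum_boundary (S : Finset (Fin n)) (x : Fin n × Fin s → ℝ)
    (σ : Fin s) :
    ∑ a ∈ S, (matLap G w *ᵥ x) (a, σ) =
      ∑ a ∈ S, ∑ k ∈ (G.neighborFinset a).filter (· ∉ S),
        ((w s(a, k))⁻¹ *ᵥ (curry x a - curry x k)) σ := by
  have hinner := sum_sum_filter_mem_eq_zero_of_antisymm G S
    (fun a k => ((w s(a, k))⁻¹ *ᵥ (curry x a - curry x k)) σ) fun a k _ => by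
      rw [Sym2.eq_swap, ← neg_sub, mulVec_neg, Pi.neg_apply]
  simp_rw [matLap_mulVec_apply]
  rw [Finset.sum_congr rfl fun a _ => (Finset.sum_filter_add_sum_filter_not _ (· ∈ S) _).symm,
    Finset.sum_add_distrib, hinner, zero_add]

theorem inv_mulVec_sub_eq_zero_of_isBridge {x : Fin n × Fin s → ℝ} (hx : matLap G w *ᵥ x = 0)
    {i j : Fin n} (hij : G.Adj i j) (hb : G.IsBridge s(i, j)) :
    (w s(i, j))⁻¹ *ᵥ (curry x i - curry x j) = 0 := by
  classical
  set S := Finset.univ.filter fun a => (G.deleteEdges {s(i, j)}).Reachable i a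
  have hiS : i ∈ S := by simp [S]
  have hjS : j ∉ S := by simpa [S] using isBridge_iff.mp hb
  have hcut : ∀ a ∈ S, ∀ k ∈ G.neighborFinset a, k ∉ S → a = i ∧ k = j := by
    intro a ha k hk hkS
    have hak : G.Adj a k := (mem_neighborFinset _ _ _).mp hk
    by_cases he : s(a, k) = s(i, j)
    · rcases Sym2.eq_iff.mp he with ⟨rfl, rfl⟩ | ⟨rfl, rfl⟩
      · exact ⟨rfl, rfl⟩
      · exact absurd ha hjS
    · refine absurd ?_ hkS
      have hra : (G.deleteEdges {s(i, j)}).Reachable i a := by simpa [S] using ha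
      simpa [S] using hra.trans (Adj.reachable (by simpa [deleteEdges_adj, hak] using he))
  have hboundary_i : (G.neighborFinset i).filter (· ∉ S) = {j} := by
    ext k
    simp only [Finset.mem_filter, Finset.mem_singleton]
    exact ⟨fun hk => (hcut i hiS k hk.1 hk.2).2, fun hk => hk ▸ ⟨by simpa using hij, hjS⟩⟩
  have hboundary_ne : ∀ a ∈ S, a ≠ i → (G.neighborFinset a).filter (· ∉ S) = ∅ := by
    intro a ha hai
    ext k
    simpa using fun hk hkS => hai (hcut a ha k hk hkS).1
  funext σ
  have hsum := sum_matLap_mulVec_eq_sum_boundary G w S x σ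
  simp only [hx, Pi.zero_apply, Finset.sum_const_zero] at hsum
  rw [Finset.sum_eq_single_of_mem i hiS fun a ha hai => by rw [hboundary_ne a ha hai, sum_empty],
    hboundary_i, Finset.sum_singleton] at hsum
  exact hsum.symm

theorem matLap_mulVec_funLeft_snd (z : Fin s → ℝ) :
    matLap G w *ᵥ LinearMap.funLeft ℝ ℝ Prod.snd z = 0 := by
  have hconst : ∀ a : Fin n, curry (LinearMap.funLeft ℝ ℝ Prod.snd z) a = z := fun _ => rfl
  funext ⟨i, σ⟩
  simp [matLap_mulVec_apply, hconst]

theorem ker_matLap_of_isTree (hT : G.IsTree) (hw : ∀ e ∈ G.edgeSet, IsUnit (w e)) :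
    LinearMap.ker (matLap G w).mulVecLin = LinearMap.range (LinearMap.funLeft ℝ ℝ Prod.snd) := by
  refine le_antisymm (fun x hx => ?_) ?_
  · rw [LinearMap.mem_ker, mulVecLin_apply] at hx
    have hadj : ∀ a b, G.Adj a b → curry x a = curry x b := fun a b hab => by
      have hb := isAcyclic_iff_forall_adj_isBridge.mp hT.isAcyclic hab
      have hunit : IsUnit (w s(a, b))⁻¹ := isUnit_nonsing_inv_iff.mpr (hw _ hab)
      exact sub_eq_zero.mp <| (mulVec_injective_iff_isUnit.mpr hunit) <| by
        rw [inv_mulVec_sub_eq_zero_of_isBridge G w hx hab hb, mulVec_zero]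
    obtain ⟨i₀⟩ := hT.connected.nonempty
    refine ⟨curry x i₀, funext fun ⟨a, σ⟩ => ?_⟩
    exact congrFun ((hT.connected.preconnected i₀ a).eq_of_forall_adj hadj) σ
  · rintro _ ⟨z, rfl⟩
    exact matLap_mulVec_funLeft_snd G w z

theorem rank_matLap_add_finrank_ker :
    (matLap G w).rank + Module.finrank ℝ (LinearMap.ker (matLap G w).mulVecLin) = n * s := by
  rw [rank, LinearMap.finrank_range_add_finrank_ker]
  simp

theorem rank_matLap_of_isTree (hT : G.IsTree) (hw : ∀ e ∈ G.edgeSet, IsUnit (w e)) :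
    (matLap G w).rank = (n - 1) * s := by
  obtain ⟨i₀⟩ := hT.connected.nonempty
  have hinj : Injective (LinearMap.funLeft ℝ ℝ (Prod.snd : Fin n × Fin s → Fin s)) :=
    LinearMap.funLeft_injective_of_surjective _ _ _ fun σ => ⟨(i₀, σ), rfl⟩
  have hker := rank_matLap_add_finrank_ker G w
  rw [ker_matLap_of_isTree G w hT hw, LinearMap.finrank_range_of_inj hinj] at hker
  have hn : 1 ≤ n := Fin.pos i₀
  simp only [Module.finrank_fintype_fun_eq_card, Fintype.card_fin] at hker
  rw [Nat.sub_mul, one_mul]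
  omega

end

theorem matLap_scalarWeights_mulVec_apply (c : Sym2 (Fin n) → ℝ) (x : Fin n × Fin s → ℝ)
    (i : Fin n) (σ : Fin s) :
    (matLap G (scalarWeights s c) *ᵥ x) (i, σ) =
      ∑ k ∈ G.neighborFinset i, c s(i, k) * (x (i, σ) - x (k, σ)) := by
  simp [matLap_mulVec_apply, scalarWeights, inv_inv_smul_one, smul_mulVec]

theorem two_mul_le_finrank_ker_matLap_scalarWeights (c : Sym2 (Fin n) → ℝ) {y : Fin n → ℝ}
    (hy : ∀ i, ∑ k ∈ G.neighborFinset i, c s(i, k) * (y i - y k) = 0) {u v : Fin n}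
    (huv : y u ≠ y v) :
    2 * s ≤ Module.finrank ℝ (LinearMap.ker (matLap G (scalarWeights s c)).mulVecLin) := by
  let Φ : ((Fin s → ℝ) × (Fin s → ℝ)) →ₗ[ℝ] (Fin n × Fin s → ℝ) :=
    (LinearMap.funLeft ℝ ℝ Prod.snd).coprod (LinearMap.pi fun p => y p.1 • LinearMap.proj p.2)
  have hΦ : ∀ pq a σ, Φ pq (a, σ) = pq.1 σ + y a * pq.2 σ := fun _ _ _ => rfl
  have hle : LinearMap.range Φ ≤ LinearMap.ker (matLap G (scalarWeights s c)).mulVecLin := by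
    rintro _ ⟨pq, rfl⟩
    rw [LinearMap.mem_ker, mulVecLin_apply]
    funext ⟨i, σ⟩
    simp only [matLap_scalarWeights_mulVec_apply, hΦ, add_sub_add_left_eq_sub, ← sub_mul,
      ← mul_assoc, ← Finset.sum_mul, hy, zero_mul, Pi.zero_apply]
  have hinj : Injective Φ := by
    rw [← LinearMap.ker_eq_bot, LinearMap.ker_eq_bot']
    intro pq hpq
    have hu σ : pq.1 σ + y u * pq.2 σ = 0 := congrFun hpq (u, σ)
    have hv σ : pq.1 σ + y v * pq.2 σ = 0 := congrFun hpq (v, σ)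
    have h2 : pq.2 = 0 := funext fun σ =>
      (mul_eq_zero.mp (by linear_combination hu σ - hv σ : (y u - y v) * pq.2 σ = 0)).resolve_left
        (sub_ne_zero.mpr huv)
    have h1 : pq.1 = 0 := funext fun σ => by simpa [h2] using hu σ
    exact Prod.ext h1 h2
  calc 2 * s = Module.finrank ℝ (LinearMap.range Φ) := by
        rw [LinearMap.finrank_range_of_inj hinj]; simp [two_mul]
    _ ≤ _ := Submodule.finrank_mono hle

theorem exists_weights_rank_matLap_lt (hG : G.Connected) (hs : 1 ≤ s) (hna : ¬G.IsAcyclic) :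
    ∃ w : Sym2 (Fin n) → Matrix (Fin s) (Fin s) ℝ,
      (∀ e ∈ G.edgeSet, IsUnit (w e)) ∧ (matLap G w).rank < (n - 1) * s := by
  obtain ⟨u, v, huv, hb⟩ : ∃ u v, G.Adj u v ∧ ¬G.IsBridge s(u, v) := by
    simpa [isAcyclic_iff_forall_adj_isBridge] using hna
  obtain ⟨t, ht, y, hyuv, hy⟩ := exists_signed_harmonic_of_not_isBridge hG huv hb
  let c : Sym2 (Fin n) → ℝ := fun e => if e = s(u, v) then t else 1
  have hc : ∀ e, c e ≠ 0 := fun e => by by_cases he : e = s(u, v) <;> simp [c, he, ht]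
  refine ⟨scalarWeights s c, fun e _ => isUnit_scalarWeights (hc e), ?_⟩
  have hker := two_mul_le_finrank_ker_matLap_scalarWeights (s := s) G c hy hyuv
  have hrank := rank_matLap_add_finrank_ker G (scalarWeights s c)
  rw [Nat.sub_mul, one_mul]
  omega

end

/-- Let `G` be a connected graph on `n` vertices and let `s ≥ 1`. Then `G` is a
tree if and only if for every assignment of `s × s` real invertible matrix weights to the
edges of `G`, the rank of the associated Laplacian (formed from the inverses of the weights)
equals `(n-1)s`. -/
theorem isTree_iff_forall_weights_rank_eq {n s : ℕ}
    (G : SimpleGraph (Fin n)) [DecidableRel G.Adj] (hG : G.Connected) (hs : 1 ≤ s) :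
    G.IsTree ↔
      ∀ w : Sym2 (Fin n) → Matrix (Fin s) (Fin s) ℝ,
        (∀ e ∈ G.edgeSet, IsUnit (w e)) → (matLap G w).rank = (n - 1) * s := by
  refine ⟨fun hT w hw => rank_matLap_of_isTree G w hT hw, fun hrank => ⟨hG, ?_⟩⟩
  by_contra hna
  obtain ⟨w, hw, hlt⟩ := exists_weights_rank_matLap_lt G hG hs hna
  exact hlt.ne (hrank w hw)
end

section
/- Let T be a tree on n vertices whose edges e_1,…,e_{n−1} are assigned s×s real matrix weights W_1,…,W_{n−1}, and let D be its distance matrix. Then det D = (−1)^{(n−1)s} · 2^{(n−2)s} · det(∏_{i=1}^{n−1} W_i) · det(∑_{i=1}^{n−1} W_i). -/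
/-
Root the tree at `r`. Every edge is the parent edge `s(u, parent u)` of exactly one `u ≠ r`,
and the path from `i` to `j` uses it iff exactly one of `i`, `j` lies in the subtree below `u`.
If `χᵤ` is the indicator of that subtree and `𝟙` the all-ones vector, this says
`D = ∑ᵤ (χᵤ 𝟙ᵀ + 𝟙 χᵤᵀ - 2 χᵤ χᵤᵀ) ⊗ Wᵤ`. The ancestor matrix `X`, whose column `u` is `χᵤ` and
whose column `r` is `𝟙`, is unitriangular with respect to depth, and `D = (X ⊗ I) A (X ⊗ I)ᵀ`
for the block arrow matrix `A` with zero corner, blocks `Wᵤ` in block row and column `r`, and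
`-2 Wᵤ` on the diagonal. Doubling the block column `r` of `A` and adding all other block columns
to it clears the column below the corner, so `2 ^ s det D = det (∑ Wᵤ) ∏ᵤ det (-2 Wᵤ)`.
-/

open Matrix Finset Kronecker

namespace Matrix

variable {V m R : Type*} [Fintype V] [DecidableEq V] [Fintype m] [DecidableEq m] [CommRing R]

theorem det_eq_prod_det_submatrix_mk_of_lt {α : Type*} [LinearOrder α] (f : V → α)
    (M : Matrix (V × m) (V × m) R)
    (hM : ∀ i j a b, i ≠ j → M (i, a) (j, b) ≠ 0 → f j < f i) :
    M.det = ∏ i, (M.submatrix (Prod.mk i) (Prod.mk i)).det := by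
  -- a linear order on `V` refining `f` makes `M` block triangular along `Prod.fst`
  let key (v : V) := toLex (OrderDual.toDual (f v), Fintype.equivFin V v)
  let _ : LinearOrder V := LinearOrder.lift' key
    fun _ _ h => (Fintype.equivFin V).injective (congrArg Prod.snd (toLex.injective h))
  have hM' : M.BlockTriangular Prod.fst := by
    rintro ⟨i, a⟩ ⟨j, b⟩ hji
    change key j < key i at hji
    by_contra h
    have hlt := hM i j a b (fun hij => hji.ne (by rw [hij])) h
    rcases Prod.Lex.toLex_lt_toLex.1 hji with hji | ⟨hji, -⟩
    · exact lt_asymm hlt hji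
    · exact hlt.ne hji
  rw [hM'.det_fintype]
  refine Fintype.prod_congr _ _ fun i => ?_
  let e : m ≃ {x : V × m // x.1 = i} :=
    { toFun := fun a => ⟨(i, a), rfl⟩
      invFun := fun x => x.1.2
      left_inv := fun _ => rfl
      right_inv := fun ⟨⟨_, _⟩, h⟩ => by subst h; rfl }
  rw [← det_reindex_self e.symm]
  rfl

noncomputable def arrowMatrix (r : V) (W : V → Matrix m m R) : Matrix (V × m) (V × m) R :=
  ∑ u ∈ univ.erase r, (single u r 1 + single r u 1 - 2 • single u u 1 : Matrix V V R) ⊗ₖ W u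

-- right multiplication by `(1 + 𝟙 eᵣᵀ) ⊗ I` doubles block column `r` and adds the others to it
theorem arrowMatrix_mul_kronecker (r : V) (W : V → Matrix m m R) :
    arrowMatrix r W * ((1 + vecMulVec 1 (Pi.single r 1)) ⊗ₖ (1 : Matrix m m R)) =
      ∑ u ∈ univ.erase r,
        (single r u 1 + single r r 1 - 2 • single u u 1 : Matrix V V R) ⊗ₖ W u := by
  rw [arrowMatrix, Finset.sum_mul]
  refine sum_congr rfl fun u _ => ?_
  rw [← mul_kronecker_mul, Matrix.mul_one, mul_add, Matrix.mul_one, mul_vecMulVec]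
  congr 1
  simp only [single_eq_single_vecMulVec_single, two_smul, add_mulVec, sub_mulVec, vecMulVec_mulVec,
    dotProduct_one, sum_pi_single', if_true, MulOpposite.op_one, one_smul, add_vecMulVec,
    sub_vecMulVec, mem_univ]
  abel

theorem det_arrowMatrix_mul_kronecker (r : V) (W : V → Matrix m m R) :
    (arrowMatrix r W * ((1 + vecMulVec 1 (Pi.single r 1)) ⊗ₖ (1 : Matrix m m R))).det =
      (∑ u ∈ univ.erase r, W u).det * ∏ u ∈ univ.erase r, ((-2 : R) • W u).det := by
  rw [arrowMatrix_mul_kronecker]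
  set N := ∑ u ∈ univ.erase r,
    (single r u 1 + single r r 1 - 2 • single u u 1 : Matrix V V R) ⊗ₖ W u
  have hN : ∀ i j a b, i ≠ r → i ≠ j → N (i, a) (j, b) = 0 := by
    intro i j a b hi hij
    simp only [N, Matrix.sum_apply]
    refine sum_eq_zero fun u _ => ?_
    have hu : ¬(u = i ∧ u = j) := fun ⟨hui, huj⟩ => hij (hui ▸ huj)
    simp [hi.symm, hu]
  have hNr : N.submatrix (Prod.mk r) (Prod.mk r) = ∑ u ∈ univ.erase r, W u := by
    ext a b
    simp only [N, submatrix_apply, Matrix.sum_apply]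
    refine sum_congr rfl fun u hu => ?_
    simp [ne_of_mem_erase hu]
  have hNv : ∀ v ≠ r, N.submatrix (Prod.mk v) (Prod.mk v) = (-2 : R) • W v := by
    intro v hv
    ext a b
    simp only [N, submatrix_apply, Matrix.sum_apply]
    rw [sum_eq_single_of_mem v (mem_erase.2 ⟨hv, mem_univ v⟩)]
    · simp [hv.symm]
    · intro u _ huv
      simp [hv.symm, huv]
  rw [det_eq_prod_det_submatrix_mk_of_lt (fun v => if v = r then 1 else 0) N,
    ← mul_prod_erase _ _ (mem_univ r), hNr]
  · congr 1
    exact prod_congr rfl fun v hv => by rw [hNv v (ne_of_mem_erase hv)]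
  · intro i j a b hij hN0
    by_cases hi : i = r
    · subst hi; simp [Ne.symm hij]
    · exact absurd (hN i j a b hi hij) hN0

theorem two_pow_mul_det_arrowMatrix (r : V) (W : V → Matrix m m R) :
    2 ^ Fintype.card m * (arrowMatrix r W).det =
      (∑ u ∈ univ.erase r, W u).det * ∏ u ∈ univ.erase r, ((-2 : R) • W u).det := by
  have hC : (1 + vecMulVec 1 (Pi.single r 1) : Matrix V V R).det = 2 := by
    rw [vecMulVec_eq Unit, det_one_add_replicateCol_mul_replicateRow, single_one_dotProduct]
    norm_num
  rw [← det_arrowMatrix_mul_kronecker, det_mul, det_kronecker, hC, det_one, one_pow, mul_one,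
    mul_comm]

end Matrix

namespace SimpleGraph

variable {V : Type*} {G : SimpleGraph V}

theorem Walk.IsTrail.mem_edges_iff_not_iff {p : V → Prop} {e : Sym2 V}
    (he : ∀ ⦃x y⦄, G.Adj x y → (s(x, y) = e ↔ ¬(p x ↔ p y))) {i j : V} {P : G.Walk i j}
    (hP : P.IsTrail) : e ∈ P.edges ↔ ¬(p i ↔ p j) := by
  induction P with
  | nil => simp
  | @cons i k j h Q ih =>
    rw [Walk.isTrail_cons] at hP
    rw [Walk.edges_cons, List.mem_cons, eq_comm]
    by_cases hik : s(i, k) = e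
    · subst hik
      have hk := (he h).1 rfl
      have hkj := (ih hP.1).not.1 hP.2
      simp only [true_or, true_iff]
      tauto
    · have hk : p i ↔ p k := not_not.1 ((he h).not.1 hik)
      rw [ih hP.1, hk]
      simp [hik]

theorem Walk.IsTrail.sum_map_edges [Fintype G.edgeSet] [DecidableEq V] {M : Type*}
    [AddCommMonoid M] {i j : V} {P : G.Walk i j} (hP : P.IsTrail) (w : Sym2 V → M) :
    (P.edges.map w).sum = ∑ e ∈ G.edgeFinset, if e ∈ P.edges then w e else 0 := by
  rw [← List.sum_toFinset w hP.edges_nodup, ← sum_filter]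
  congr 1
  ext e
  simp only [List.mem_toFinset, mem_filter, mem_edgeFinset, iff_and_self]
  exact fun he => P.edges_subset_edgeSet he

namespace IsTree

variable (hT : G.IsTree) (r : V)

noncomputable def rootPath (v : V) : G.Walk v r := (hT.existsUnique_path v r).choose

theorem isPath_rootPath (v : V) : (hT.rootPath r v).IsPath :=
  (hT.existsUnique_path v r).choose_spec.1

variable {r} in
theorem eq_rootPath {v : V} {p : G.Walk v r} (hp : p.IsPath) : p = hT.rootPath r v :=
  (hT.existsUnique_path v r).choose_spec.2 p hp

theorem rootPath_root : hT.rootPath r r = .nil :=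
  (hT.eq_rootPath .nil).symm

noncomputable def parent (v : V) : V := (hT.rootPath r v).snd

noncomputable def depth (v : V) : ℕ := (hT.rootPath r v).length

section

variable {r}

theorem adj_parent {v : V} (hv : v ≠ r) : G.Adj v (hT.parent r v) :=
  Walk.adj_snd (Walk.not_nil_of_ne hv)

theorem rootPath_eq_cons {v : V} (hv : v ≠ r) :
    hT.rootPath r v = .cons (hT.adj_parent hv) (hT.rootPath r (hT.parent r v)) := by
  have hnil := Walk.not_nil_of_ne (p := hT.rootPath r v) hv
  calc hT.rootPath r v = .cons (Walk.adj_snd hnil) (hT.rootPath r v).tail :=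
        (Walk.cons_tail_eq _ hnil).symm
    _ = _ := by rw [hT.eq_rootPath ((hT.isPath_rootPath r v).tail)]; rfl

theorem depth_parent_add_one {v : V} (hv : v ≠ r) :
    hT.depth r (hT.parent r v) + 1 = hT.depth r v := by
  rw [depth, depth, hT.rootPath_eq_cons hv, Walk.length_cons]

theorem mem_support_rootPath_iff {u v : V} (hv : v ≠ r) :
    u ∈ (hT.rootPath r v).support ↔ u = v ∨ u ∈ (hT.rootPath r (hT.parent r v)).support := by
  rw [hT.rootPath_eq_cons hv, Walk.support_cons, List.mem_cons]

theorem notMem_support_rootPath_parent {v : V} (hv : v ≠ r) :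
    v ∉ (hT.rootPath r (hT.parent r v)).support := by
  have hP := hT.isPath_rootPath r v
  rw [hT.rootPath_eq_cons hv, Walk.cons_isPath_iff] at hP
  exact hP.2

theorem depth_lt_of_mem_support_rootPath {u v : V} (h : u ∈ (hT.rootPath r v).support)
    (huv : u ≠ v) : hT.depth r u < hT.depth r v := by
  classical
  unfold depth
  rw [← hT.eq_rootPath ((hT.isPath_rootPath r v).dropUntil h)]
  exact Walk.length_dropUntil_lt_length h huv

theorem parent_eq_or_parent_eq_of_adj {x y : V} (h : G.Adj x y) :
    (x ≠ r ∧ hT.parent r x = y) ∨ (y ≠ r ∧ hT.parent r y = x) := by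
  classical
  by_cases hy : y ∈ (hT.rootPath r x).support
  · have hx : x ≠ r := by
      rintro rfl
      rw [rootPath_root, Walk.support_nil, List.mem_singleton] at hy
      exact h.ne hy.symm
    exact .inl ⟨hx, (hT.isAcyclic.eq_snd_of_adj_start (hT.isPath_rootPath r x) h hy).symm⟩
  · have hyr : y ≠ r := fun hyr => hy (hyr ▸ Walk.end_mem_support _)
    refine .inr ⟨hyr, ?_⟩
    have hP : (Walk.cons h.symm (hT.rootPath r x)).IsPath :=
      (Walk.cons_isPath_iff _ _).2 ⟨hT.isPath_rootPath r x, hy⟩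
    rw [parent, ← hT.eq_rootPath hP, Walk.snd_cons]

theorem eq_of_parentEdge_eq {u v : V} (hu : u ≠ r) (hv : v ≠ r)
    (h : s(u, hT.parent r u) = s(v, hT.parent r v)) : u = v := by
  rcases Sym2.eq_iff.1 h with ⟨huv, -⟩ | ⟨hu', hv'⟩
  · exact huv
  · have hdu := hT.depth_parent_add_one hu
    have hdv := hT.depth_parent_add_one hv
    rw [hv'] at hdu
    rw [← hu'] at hdv
    omega

theorem parentEdge_eq_iff_of_adj {u x y : V} (hu : u ≠ r) (h : G.Adj x y) :
    s(x, y) = s(u, hT.parent r u) ↔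
      ¬(u ∈ (hT.rootPath r x).support ↔ u ∈ (hT.rootPath r y).support) := by
  wlog hxy : x ≠ r ∧ hT.parent r x = y generalizing x y
  · have hyx := (hT.parent_eq_or_parent_eq_of_adj h).resolve_left hxy
    rw [Sym2.eq_swap, this h.symm hyx]
    tauto
  obtain ⟨hx, rfl⟩ := hxy
  rw [hT.mem_support_rootPath_iff hx]
  constructor
  · intro he
    obtain rfl := hT.eq_of_parentEdge_eq hx hu he
    simpa using hT.notMem_support_rootPath_parent hx
  · intro hne
    have : u = x := by tauto
    rw [this]

theorem parentEdge_mem_edges_iff {u i j : V} (hu : u ≠ r) {P : G.Walk i j} (hP : P.IsTrail) :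
    s(u, hT.parent r u) ∈ P.edges ↔
      ¬(u ∈ (hT.rootPath r i).support ↔ u ∈ (hT.rootPath r j).support) :=
  hP.mem_edges_iff_not_iff fun _ _ h => hT.parentEdge_eq_iff_of_adj hu h

end

variable [Fintype V] [DecidableEq V]

theorem edgeFinset_eq_image [Fintype G.edgeSet] :
    G.edgeFinset = (univ.erase r).image fun v => s(v, hT.parent r v) := by
  ext e
  induction e using Sym2.ind with | _ x y => ?_
  simp only [mem_edgeFinset, mem_edgeSet, mem_image, mem_erase, mem_univ, and_true]
  constructor
  · intro h
    rcases hT.parent_eq_or_parent_eq_of_adj (r := r) h with ⟨hx, rfl⟩ | ⟨hy, rfl⟩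
    · exact ⟨x, hx, rfl⟩
    · exact ⟨y, hy, Sym2.eq_swap⟩
  · rintro ⟨v, hv, he⟩
    rw [← mem_edgeSet, ← he]
    exact hT.adj_parent hv

@[to_additive]
theorem prod_edgeFinset_eq [Fintype G.edgeSet] {M : Type*} [CommMonoid M] (g : Sym2 V → M) :
    ∏ e ∈ G.edgeFinset, g e = ∏ v ∈ univ.erase r, g s(v, hT.parent r v) := by
  rw [hT.edgeFinset_eq_image, prod_image fun u hu v hv =>
    hT.eq_of_parentEdge_eq (ne_of_mem_erase hu) (ne_of_mem_erase hv)]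

theorem sum_map_edges_eq_sum_parentEdge {M : Type*} [AddCommMonoid M]
    {i j : V} {P : G.Walk i j} (hP : P.IsTrail) (w : Sym2 V → M) :
    (P.edges.map w).sum = ∑ u ∈ univ.erase r,
      if u ∈ (hT.rootPath r i).support ↔ u ∈ (hT.rootPath r j).support then 0
      else w s(u, hT.parent r u) := by
  classical
  rw [hP.sum_map_edges, hT.sum_edgeFinset_eq r]
  refine sum_congr rfl fun u hu => ?_
  simp only [hT.parentEdge_mem_edges_iff (ne_of_mem_erase hu) hP, ite_not]

variable (R : Type*) [CommRing R]

noncomputable def ancestorMatrix : Matrix V V R :=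
  of fun v u => if u ∈ (hT.rootPath r v).support then 1 else 0

theorem det_ancestorMatrix_kronecker_one {m : Type*} [Fintype m] [DecidableEq m] :
    (hT.ancestorMatrix r R ⊗ₖ (1 : Matrix m m R)).det = 1 := by
  rw [det_eq_prod_det_submatrix_mk_of_lt (hT.depth r)]
  · refine prod_eq_one fun v _ => ?_
    convert det_one (R := R) (n := m)
    ext a b
    simp [ancestorMatrix, Walk.start_mem_support, one_apply]
  · intro i j a b hij h
    refine hT.depth_lt_of_mem_support_rootPath ?_ (Ne.symm hij)
    by_contra hji
    simp [ancestorMatrix, hji] at h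

theorem ancestorMatrix_mul_mul_transpose (u : V) :
    hT.ancestorMatrix r R * (single u r 1 + single r u 1 - 2 • single u u 1) *
        (hT.ancestorMatrix r R)ᵀ =
      of fun i j =>
        if u ∈ (hT.rootPath r i).support ↔ u ∈ (hT.rootPath r j).support then 0 else 1 := by
  simp only [single_eq_single_vecMulVec_single, two_smul, mul_add, mul_sub, add_mul, sub_mul,
    mul_vecMulVec, vecMulVec_mul, vecMul_transpose, mulVec_single_one]
  ext i j
  simp only [ancestorMatrix, Matrix.add_apply, Matrix.sub_apply, vecMulVec_apply, col_apply,
    of_apply, Walk.end_mem_support, if_true, mul_one, one_mul]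
  by_cases hi : u ∈ (hT.rootPath r i).support <;> by_cases hj : u ∈ (hT.rootPath r j).support <;>
    simp [hi, hj]

theorem eq_ancestorMatrix_kronecker_mul_arrowMatrix {m : Type*} [Fintype m] [DecidableEq m]
    (w : Sym2 V → Matrix m m R) (D : Matrix (V × m) (V × m) R)
    (hD : ∀ (i j : V) (p : G.Walk i j), p.IsPath →
      ∀ a b, D (i, a) (j, b) = (p.edges.map w).sum a b) :
    D = (hT.ancestorMatrix r R ⊗ₖ 1) * arrowMatrix r (fun u => w s(u, hT.parent r u)) *
      (hT.ancestorMatrix r R ⊗ₖ 1)ᵀ := by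
  rw [arrowMatrix, Matrix.mul_sum, Matrix.sum_mul]
  ext ⟨i, a⟩ ⟨j, b⟩
  obtain ⟨P, hP, -⟩ := hT.existsUnique_path i j
  rw [hD i j P hP, hT.sum_map_edges_eq_sum_parentEdge r hP.isTrail, Matrix.sum_apply,
    Matrix.sum_apply]
  refine sum_congr rfl fun u _ => ?_
  rw [← kroneckerMap_transpose, transpose_one, ← mul_kronecker_mul, ← mul_kronecker_mul,
    Matrix.one_mul, Matrix.mul_one, ancestorMatrix_mul_mul_transpose, kroneckerMap_apply, of_apply]
  split_ifs <;> simp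

end IsTree

theorem IsTree.two_pow_mul_det_distanceMatrix [Fintype V] [DecidableEq V] [Fintype G.edgeSet]
    (hT : G.IsTree) {R : Type*} [CommRing R] {m : Type*} [Fintype m]
    [DecidableEq m] (w : Sym2 V → Matrix m m R) (D : Matrix (V × m) (V × m) R)
    (hD : ∀ (i j : V) (p : G.Walk i j), p.IsPath →
      ∀ a b, D (i, a) (j, b) = (p.edges.map w).sum a b) :
    2 ^ Fintype.card m * D.det =
      (∑ e ∈ G.edgeFinset, w e).det * ∏ e ∈ G.edgeFinset, ((-2 : R) • w e).det := by
  obtain ⟨r⟩ := hT.connected.nonempty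
  rw [hT.eq_ancestorMatrix_kronecker_mul_arrowMatrix r R w D hD, det_mul, det_mul, det_transpose,
    det_ancestorMatrix_kronecker_one, one_mul, mul_one, two_pow_mul_det_arrowMatrix,
    hT.sum_edgeFinset_eq r, hT.prod_edgeFinset_eq r]

end SimpleGraph

/-- (Bapat) Let `T` be a tree on `n` vertices whose `n-1` edges are assigned
`s × s` real matrix weights, and let `D` be its distance matrix (the `(i,j)` block is the sum
of the weights of the edges on the unique path from `i` to `j`).  Then
`det D = (-1)^{(n-1)s} 2^{(n-2)s} det(∏ᵢ Wᵢ) det(∑ᵢ Wᵢ)`, where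
`det(∏ᵢ Wᵢ) = ∏ᵢ det Wᵢ` is expressed as the product of the determinants of the edge
weights (so as to be independent of the ordering of the factors). -/
theorem det_distanceMatrix_tree {n s : ℕ}
    (G : SimpleGraph (Fin n)) [DecidableRel G.Adj] (hT : G.IsTree)
    (w : Sym2 (Fin n) → Matrix (Fin s) (Fin s) ℝ)
    (D : Matrix (Fin n × Fin s) (Fin n × Fin s) ℝ)
    (hD : ∀ (i j : Fin n) (p : G.Walk i j), p.IsPath →
      ∀ a b, D (i, a) (j, b) = ((p.edges.map w).sum) a b) :
    D.det = (-1 : ℝ) ^ ((n - 1) * s) * 2 ^ ((n - 2) * s) *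
      (∏ e ∈ G.edgeFinset, (w e).det) * (∑ e ∈ G.edgeFinset, w e).det := by
  have h := hT.two_pow_mul_det_distanceMatrix w D hD
  have hcard : #G.edgeFinset = n - 1 := by
    have := hT.card_edgeFinset
    simp only [Fintype.card_fin] at this
    omega
  simp only [det_smul, prod_mul_distrib, prod_const, hcard, Fintype.card_fin] at h
  obtain ⟨k, rfl⟩ : ∃ k, n = k + 1 :=
    Nat.exists_eq_add_one.2 (Fin.pos_iff_nonempty.2 hT.connected.nonempty)
  rcases k with _ | k
  -- a single vertex: `n - 2` truncates to `0`, and both sides are `det 0`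
  · have hE : G.edgeFinset = ∅ := card_eq_zero.1 hcard
    rcases s.eq_zero_or_pos with rfl | hs
    · simp [det_isEmpty]
    · have : Nonempty (Fin s) := ⟨⟨0, hs⟩⟩
      simpa [hE] using h
  · refine mul_left_cancel₀ (pow_ne_zero s (two_ne_zero : (2 : ℝ) ≠ 0)) ?_
    rw [h, Nat.add_sub_cancel, Nat.add_sub_add_right, Nat.add_sub_cancel, neg_pow]
    ring
end

section
/- Let T be a tree on n vertices with s×s real matrix edge weights W_1,…,W_{n−1} such that the distance matrix D of T is invertible, and let L be the Laplacian matrix of T formed from the inverses of the weights. For i = 1,…,n let δ_i = 2 − d_i, where d_i is the degree of vertex i, and let δ = (δ_1,…,δ_n)^T and let 1 denote the all-ones column vector of length n. Then L·D = (δ·1^T) ⊗ I_s − 2 I_n ⊗ I_s. -/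
open Matrix
open scoped Kronecker

theorem Matrix.dvd_one_of_forall_dvd_sub {ι R : Type*} [Fintype ι] [DecidableEq ι] [Ring R]
    {B : Matrix ι ι R} (hB : IsUnit B) {a b : ι} (hab : a ≠ b) {x : R}
    (h : ∀ j, x ∣ B a j - B b j) : x ∣ 1 := by
  choose y hy using h
  obtain ⟨C, hC⟩ := hB.exists_right_inv
  refine ⟨∑ j, y j * C j a, ?_⟩
  calc 1 = (B * C) a a - (B * C) b a := by rw [hC, one_apply_eq, one_apply_ne hab.symm, sub_zero]
    _ = ∑ j, (B a j - B b j) * C j a := by simp only [mul_apply, sub_mul, Finset.sum_sub_distrib]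
    _ = x * ∑ j, y j * C j a := by simp only [Finset.mul_sum, hy, mul_assoc]

namespace SimpleGraph

variable {V : Type*} [DecidableEq V] {G : SimpleGraph V}

theorem IsAcyclic.eq_cons_dropUntil_of_adj (hG : G.IsAcyclic) {u v w : V} {p : G.Walk u v}
    (hp : p.IsPath) (h : G.Adj u w) (hw : w ∈ p.support) :
    p = Walk.cons h (p.dropUntil w hw) := by
  have htake : p.takeUntil w hw = Walk.cons h Walk.nil :=
    congrArg Subtype.val ((hG.subsingleton_path u w).elim ⟨_, hp.takeUntil hw⟩ (Path.singleton h))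
  conv_lhs => rw [← p.take_spec hw, htake]
  rfl

theorem IsAcyclic.filter_neighborFinset_mem_support (hG : G.IsAcyclic)
    {u v : V} [Fintype (G.neighborSet u)] {p : G.Walk u v} (hp : p.IsPath) :
    {w ∈ G.neighborFinset u | w ∈ p.support} = if u = v then ∅ else {p.snd} := by
  ext w
  simp only [Finset.mem_filter, mem_neighborFinset]
  constructor
  · rintro ⟨h, hw⟩
    have hp' := hG.eq_cons_dropUntil_of_adj hp h hw
    split_ifs with huv
    · subst huv
      have hnil : p.Nil := Walk.isPath_iff_nil.mp hp
      rw [hp'] at hnil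
      exact absurd hnil Walk.not_nil_cons
    · rw [Finset.mem_singleton, hp', Walk.snd_cons]
  · split_ifs with huv
    · simp
    · rw [Finset.mem_singleton]
      rintro rfl
      have hnil : ¬p.Nil := fun h => huv (hp.nil_iff_eq.mp h)
      exact ⟨Walk.adj_snd hnil, List.mem_of_mem_tail (Walk.snd_mem_tail_support hnil)⟩

variable {A : Type*}

def IsDistanceMatrix [AddMonoid A] (G : SimpleGraph V) (w : Sym2 V → A) (d : Matrix V V A) :
    Prop :=
  ∀ i j (p : G.Walk i j), p.IsPath → d i j = (p.edges.map w).sum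

namespace IsDistanceMatrix

variable {w : Sym2 V → A} {d : Matrix V V A}

theorem sub_of_adj [AddCommGroup A] (hd : G.IsDistanceMatrix w d) (hG : G.IsAcyclic)
    {i j k : V} {p : G.Walk i j} (hp : p.IsPath) (hik : G.Adj i k) :
    d i j - d k j = if k ∈ p.support then w s(i, k) else -w s(i, k) := by
  split_ifs with hk
  · have hedges := congrArg Walk.edges (hG.eq_cons_dropUntil_of_adj hp hik hk)
    rw [Walk.edges_cons] at hedges
    rw [hd _ _ p hp, hd _ _ _ (hp.dropUntil hk), hedges, List.map_cons, List.sum_cons,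
      add_sub_cancel_right]
  · rw [hd _ _ p hp, hd _ _ _ (hp.cons hk (h := hik.symm)), Walk.edges_cons, List.map_cons,
      List.sum_cons, Sym2.eq_swap]
    abel

theorem sum_neighborFinset_mul_sub [Ring A] (hd : G.IsDistanceMatrix w d) (hG : G.IsAcyclic)
    {i j : V} (hij : G.Reachable i j) [Fintype (G.neighborSet i)] (u : Sym2 V → A)
    (hu : ∀ k, G.Adj i k → u s(i, k) * w s(i, k) = 1) :
    ∑ k ∈ G.neighborFinset i, u s(i, k) * (d i j - d k j) =
      ((2 - G.degree i - if i = j then 2 else 0 : ℤ)) • (1 : A) := by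
  obtain ⟨q⟩ := hij
  have hp := q.bypass_isPath
  have hterm : ∀ k ∈ G.neighborFinset i,
      u s(i, k) * (d i j - d k j) = if k ∈ q.bypass.support then 1 else -1 := by
    intro k hk
    have hik := (mem_neighborFinset G i k).mp hk
    rw [hd.sub_of_adj hG hp hik]
    split_ifs <;> simp [hu k hik]
  have hcard := Finset.card_filter_add_card_filter_not (s := G.neighborFinset i)
    (fun k => k ∈ q.bypass.support)
  rw [hG.filter_neighborFinset_mem_support hp, card_neighborFinset_eq_degree] at hcard
  rw [Finset.sum_congr rfl hterm, Finset.sum_ite, Finset.sum_const, Finset.sum_const,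
    hG.filter_neighborFinset_mem_support hp, smul_neg, ← sub_eq_add_neg, ← natCast_zsmul,
    ← natCast_zsmul, ← sub_smul]
  congr 1
  split_ifs at hcard ⊢ <;> simp only [Finset.card_empty, Finset.card_singleton] at hcard ⊢ <;> omega

theorem dvd_one_of_adj [Ring A] [Fintype V] (hd : G.IsDistanceMatrix w d) (hT : G.IsTree)
    (hunit : IsUnit d) {a b : V} (hab : G.Adj a b) : w s(a, b) ∣ 1 := by
  refine Matrix.dvd_one_of_forall_dvd_sub hunit hab.ne fun j => ?_
  obtain ⟨q⟩ := hT.connected.preconnected a j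
  rw [hd.sub_of_adj hT.isAcyclic q.bypass_isPath hab]
  split_ifs
  exacts [dvd_rfl, dvd_neg.mpr dvd_rfl]

end IsDistanceMatrix

end SimpleGraph

section matLap

variable {n s : ℕ} (G : SimpleGraph (Fin n)) [DecidableRel G.Adj]
  (w : Sym2 (Fin n) → Matrix (Fin s) (Fin s) ℝ)

theorem comp_symm_matLap_apply (i k : Fin n) :
    (comp _ _ _ _ ℝ).symm (matLap G w) i k =
      if i = k then ∑ l ∈ G.neighborFinset i, (w s(i, l))⁻¹
      else if G.Adj i k then -(w s(i, k))⁻¹ else 0 := by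
  ext a b
  simp only [comp_symm_apply, matLap, of_apply]
  split_ifs <;> rfl

theorem comp_symm_matLap_mul_apply (D : Matrix (Fin n × Fin s) (Fin n × Fin s) ℝ) (i j : Fin n) :
    (comp _ _ _ _ ℝ).symm (matLap G w * D) i j =
      ∑ k ∈ G.neighborFinset i,
        (w s(i, k))⁻¹ * ((comp _ _ _ _ ℝ).symm D i j - (comp _ _ _ _ ℝ).symm D k j) := by
  set B := (comp _ _ _ _ ℝ).symm D
  have hentry : ∀ k, (comp _ _ _ _ ℝ).symm (matLap G w) i k * B k j =
      (if i = k then (∑ l ∈ G.neighborFinset i, (w s(i, l))⁻¹) * B i j else 0) +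
        if k ∈ G.neighborFinset i then -(w s(i, k))⁻¹ * B k j else 0 := by
    intro k
    rw [comp_symm_matLap_apply]
    simp only [SimpleGraph.mem_neighborFinset]
    by_cases hik : i = k
    · subst hik
      simp
    · by_cases hadj : G.Adj i k <;> simp [hik, hadj]
  rw [← compRingEquiv_symm_apply, map_mul, mul_apply]
  simp only [compRingEquiv_symm_apply]
  rw [Finset.sum_congr rfl fun k _ => hentry k, Finset.sum_add_distrib, Finset.sum_ite_eq,
    Finset.sum_ite_mem, Finset.univ_inter, if_pos (Finset.mem_univ _), Finset.sum_mul,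
    ← Finset.sum_add_distrib]
  exact Finset.sum_congr rfl fun k _ => by rw [neg_mul, ← sub_eq_add_neg, mul_sub]

end matLap

/-- Let `T` be a tree on `n` vertices with `s × s` real matrix edge weights such
that the distance matrix `D` of `T` is invertible, and let `L` be the Laplacian formed from the
inverses of the weights.  With `δᵢ = 2 - dᵢ` and `𝟙` the all-ones vector,
`L · D = (δ 𝟙ᵀ) ⊗ I_s - 2 Iₙ ⊗ I_s`. -/
theorem lap_mul_distanceMatrix {n s : ℕ}
    (G : SimpleGraph (Fin n)) [DecidableRel G.Adj] (hT : G.IsTree)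
    (w : Sym2 (Fin n) → Matrix (Fin s) (Fin s) ℝ)
    (D : Matrix (Fin n × Fin s) (Fin n × Fin s) ℝ)
    (hD : ∀ (i j : Fin n) (p : G.Walk i j), p.IsPath →
      ∀ a b, D (i, a) (j, b) = ((p.edges.map w).sum) a b)
    (hDinv : IsUnit D)
    (δ : Fin n → ℝ) (hδ : ∀ i, δ i = 2 - (G.degree i : ℝ)) :
    matLap G w * D = vecMulVec δ (fun _ => (1 : ℝ)) ⊗ₖ (1 : Matrix (Fin s) (Fin s) ℝ)
      - (2 : ℝ) • ((1 : Matrix (Fin n) (Fin n) ℝ) ⊗ₖ (1 : Matrix (Fin s) (Fin s) ℝ)) := by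
  have hB : G.IsDistanceMatrix w ((comp _ _ _ _ ℝ).symm D) := fun i j p hp => by
    ext a b
    exact hD i j p hp a b
  have hinv : ∀ i k, G.Adj i k → (w s(i, k))⁻¹ * w s(i, k) = 1 := fun i k hik => by
    obtain ⟨y, hy⟩ := hB.dvd_one_of_adj hT ((isUnit_comp_symm_iff _ _ _).mpr hDinv) hik
    rw [inv_eq_right_inv hy.symm, mul_eq_one_comm.mp hy.symm]
  apply (comp _ _ _ _ ℝ).symm.injective
  refine Matrix.ext fun i j => ?_
  rw [comp_symm_matLap_mul_apply]
  refine (hB.sum_neighborFinset_mul_sub hT.isAcyclic (hT.connected.preconnected i j)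
    (fun e => (w e)⁻¹) (hinv i)).trans ?_
  ext a b
  simp only [Matrix.smul_apply, comp_symm_apply, Matrix.sub_apply, kroneckerMap_apply,
    vecMulVec_apply, hδ, one_apply]
  split_ifs <;> simp_all
end

section
/- Let T be a tree on n vertices whose edges are assigned s×s real positive definite matrix weights, let D be its distance matrix, and let Q be the incidence matrix of T built from the inverse square roots of the weights. Then Q^T · D · Q = −2 I_{(n−1)s}. -/
/-!
With `S j = (√W j)⁻¹`, the incidence matrix is the block matrix whose column `j` carries `S j`
at the tail and `-S j` at the head of the edge `e j`, so for `e j = xy` and `e k = uv` the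
`(j, k)` block of `Qᵀ D Q` is `(S j)ᵀ (D x u - D x v - (D y u - D y v)) S k`.
For `j = k` this is `(S j)ᵀ (-2 W j) S j = -2 I`. For `j ≠ k`, deleting `uv` splits the tree
into two sides and `x`, `y` lie on the same one, say that of `u`; every path from that side to
`v` ends with the edge `uv`, so `D x v - D x u = W k = D y v - D y u` and the block vanishes.
-/

open Matrix
open scoped MatrixOrder

namespace SimpleGraph

variable {V M : Type*} {G : SimpleGraph V}

lemma Preconnected.reachable_deleteEdges_or (hG : G.Preconnected) (a u v : V) :
    (G.deleteEdges {s(u, v)}).Reachable a u ∨ (G.deleteEdges {s(u, v)}).Reachable a v := by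
  classical
  by_contra! h
  obtain ⟨P, hP⟩ := (hG a u).exists_isPath
  have huv_mem := P.mem_edges_of_not_reachable_deleteEdges h.1
  have hv := P.snd_mem_support_of_mem_edges huv_mem
  have hu := Walk.endpoint_notMem_support_takeUntil hP hv (P.adj_of_mem_edges huv_mem).ne
  exact hu <| Walk.fst_mem_support_of_mem_edges _ <|
    (P.takeUntil v hv).mem_edges_of_not_reachable_deleteEdges h.2

def IsPathWeightSum [AddCommMonoid M] (G : SimpleGraph V) (w : Sym2 V → M) (d : V → V → M) :
    Prop :=
  ∀ (i j : V) (p : G.Walk i j), p.IsPath → d i j = (p.edges.map w).sum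

namespace IsPathWeightSum

section AddCommMonoid

variable [AddCommMonoid M] {w : Sym2 V → M} {d : V → V → M}

lemma apply_self (hd : G.IsPathWeightSum w d) (i : V) : d i i = 0 := by
  simpa using hd i i .nil .nil

lemma apply_of_adj (hd : G.IsPathWeightSum w d) {u v : V} (h : G.Adj u v) : d u v = w s(u, v) := by
  simpa using hd u v (.cons h .nil) (Walk.IsPath.nil.cons (by simpa using h.ne))

lemma apply_eq_add_of_reachable_deleteEdges (hd : G.IsPathWeightSum w d) (hG : G.IsAcyclic)
    {a u v : V} (huv : G.Adj u v) (ha : (G.deleteEdges {s(u, v)}).Reachable a u) :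
    d a v = d a u + w s(u, v) := by
  classical
  obtain ⟨q⟩ := ha
  have hv : v ∉ q.bypass.support := fun hv ↦
    isAcyclic_iff_forall_adj_isBridge.mp hG huv ⟨(q.bypass.dropUntil v hv).reverse⟩
  have hp := q.bypass_isPath.mapLe (G.deleteEdges_le {s(u, v)})
  rw [hd _ _ _ hp, hd _ _ _ (hp.concat (by rwa [Walk.support_mapLe_eq_support]) huv),
    Walk.edges_concat, List.map_concat, List.sum_concat]

end AddCommMonoid

variable [AddCommGroup M] {w : Sym2 V → M} {d : V → V → M}

lemma sub_eq_sub_of_adj (hd : G.IsPathWeightSum w d) (hG : G.IsTree) {x y u v : V}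
    (hxy : G.Adj x y) (huv : G.Adj u v) (hne : s(x, y) ≠ s(u, v)) :
    d x u - d x v = d y u - d y v := by
  have hxy' : (G.deleteEdges {s(u, v)}).Adj x y := by simpa [hxy] using hne
  rcases hG.connected.preconnected.reachable_deleteEdges_or x u v with hx | hx
  · rw [hd.apply_eq_add_of_reachable_deleteEdges hG.isAcyclic huv hx,
      hd.apply_eq_add_of_reachable_deleteEdges hG.isAcyclic huv (hxy'.reachable.symm.trans hx)]
    abel
  · rw [Sym2.eq_swap] at hxy' hx
    rw [hd.apply_eq_add_of_reachable_deleteEdges hG.isAcyclic huv.symm hx,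
      hd.apply_eq_add_of_reachable_deleteEdges hG.isAcyclic huv.symm
        (hxy'.reachable.symm.trans hx)]
    abel

end IsPathWeightSum

end SimpleGraph

namespace Matrix

variable {I J L K V ι A R : Type*}

theorem comp_mul [Fintype J] [Fintype K] [NonUnitalNonAssocSemiring R]
    (M : Matrix I J (Matrix K K R)) (N : Matrix J L (Matrix K K R)) :
    comp I L K K R (M * N) = comp I J K K R M * comp J L K K R N := by
  ext
  exact sum_apply .. |>.trans <| .symm <| Fintype.sum_prod_type ..

def signedIncidence [DecidableEq V] [Zero A] [Neg A] (e : ι → V × V) (S : ι → A) :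
    Matrix V ι A :=
  of fun p j => if p = (e j).1 then S j else if p = (e j).2 then -S j else 0

theorem signedIncidence_map_transpose [DecidableEq V] [AddGroup R] (e : ι → V × V)
    (S : ι → Matrix K K R) :
    (signedIncidence e S).map transpose = signedIncidence e fun j ↦ (S j)ᵀ := by
  ext p j : 1
  simp only [signedIncidence, map_apply, of_apply, apply_ite transpose, transpose_neg,
    transpose_zero]

theorem signedIncidence_apply_eq_sub [DecidableEq V] [AddGroup A] {e : ι → V × V} (S : ι → A)
    {k : ι} (hk : (e k).1 ≠ (e k).2) (p : V) :
    signedIncidence e S p k =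
      (if p = (e k).1 then S k else 0) - (if p = (e k).2 then S k else 0) := by
  simp only [signedIncidence, of_apply]
  split_ifs <;> simp_all

section Ring

variable [DecidableEq V] [Fintype V] [Ring A] {e : ι → V × V}

theorem mul_signedIncidence_apply (S : ι → A) (M : Matrix I V A) (i : I) {k : ι}
    (hk : (e k).1 ≠ (e k).2) :
    (M * signedIncidence e S) i k = (M i (e k).1 - M i (e k).2) * S k := by
  simp [mul_apply, signedIncidence_apply_eq_sub S hk, mul_sub, sub_mul]

theorem transpose_signedIncidence_mul_apply (T : ι → A) (M : Matrix V L A) {j : ι}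
    (hj : (e j).1 ≠ (e j).2) (l : L) :
    ((signedIncidence e T)ᵀ * M) j l = T j * (M (e j).1 l - M (e j).2 l) := by
  simp [mul_apply, signedIncidence_apply_eq_sub T hj, mul_sub, sub_mul]

theorem transpose_signedIncidence_mul_mul_signedIncidence_apply (T S : ι → A) (M : Matrix V V A)
    {j k : ι} (hj : (e j).1 ≠ (e j).2) (hk : (e k).1 ≠ (e k).2) :
    ((signedIncidence e T)ᵀ * M * signedIncidence e S) j k =
      T j * (M (e j).1 (e k).1 - M (e j).1 (e k).2 - (M (e j).2 (e k).1 - M (e j).2 (e k).2)) *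
        S k := by
  rw [Matrix.mul_assoc, transpose_signedIncidence_mul_apply T _ hj,
    mul_signedIncidence_apply S _ _ hk, mul_signedIncidence_apply S _ _ hk, ← sub_mul,
    _root_.mul_assoc]

end Ring

theorem PosDef.transpose_inv_sqrt_mul_mul_inv_sqrt [Fintype K] [DecidableEq K]
    {W : Matrix K K ℝ} (hW : W.PosDef) :
    ((CFC.sqrt W)⁻¹)ᵀ * W * (CFC.sqrt W)⁻¹ = 1 := by
  set R := CFC.sqrt W
  have hRR : R * R = W := CFC.sqrt_mul_sqrt_self W hW.posSemidef.nonneg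
  have hR : Rᵀ = R := by
    simpa [IsSelfAdjoint, star_eq_conjTranspose] using IsSelfAdjoint.of_nonneg (CFC.sqrt_nonneg W)
  have hdet : IsUnit R.det := by
    have h := (isUnit_iff_isUnit_det _).mp hW.isUnit
    rw [← hRR, det_mul] at h
    exact isUnit_of_mul_isUnit_left h
  rw [transpose_nonsing_inv, hR, ← hRR, ← Matrix.mul_assoc, nonsing_inv_mul _ hdet,
    Matrix.one_mul, mul_nonsing_inv _ hdet]

end Matrix

theorem transpose_incidence_mul_dist_mul_incidence_general {n s : ℕ}
    (G : SimpleGraph (Fin n)) (hT : G.IsTree)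
    (o : Fin (n - 1) → Fin n × Fin n)
    (ho_adj : ∀ j, G.Adj (o j).1 (o j).2)
    (ho_inj : Function.Injective fun j => Sym2.mk (o j).1 (o j).2)
    (W : Fin (n - 1) → Matrix (Fin s) (Fin s) ℝ)
    (hW : ∀ j, (W j).PosDef)
    (w : Sym2 (Fin n) → Matrix (Fin s) (Fin s) ℝ)
    (hwW : ∀ j, w (Sym2.mk (o j).1 (o j).2) = W j)
    (D : Matrix (Fin n × Fin s) (Fin n × Fin s) ℝ)
    (hD : ∀ (i j : Fin n) (p : G.Walk i j), p.IsPath →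
      ∀ a b, D (i, a) (j, b) = ((p.edges.map w).sum) a b)
    (Q : Matrix (Fin n × Fin s) (Fin (n - 1) × Fin s) ℝ)
    (hQ : ∀ p q, Q p q =
      if p.1 = (o q.1).1 then ((CFC.sqrt (W q.1))⁻¹) p.2 q.2
      else if p.1 = (o q.1).2 then -(((CFC.sqrt (W q.1))⁻¹) p.2 q.2)
      else 0) :
    Qᵀ * D * Q = (-2 : ℝ) • (1 : Matrix (Fin (n - 1) × Fin s) (Fin (n - 1) × Fin s) ℝ) := by
  set S := fun j ↦ (CFC.sqrt (W j))⁻¹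
  set B := (comp _ _ _ _ ℝ).symm D
  have hloop j : (o j).1 ≠ (o j).2 := (ho_adj j).ne
  have hQB : Q = comp _ _ _ _ ℝ (signedIncidence o S) := by
    ext ⟨p, a⟩ ⟨j, b⟩
    simp [hQ, S, signedIncidence, apply_ite (fun M : Matrix (Fin s) (Fin s) ℝ ↦ M a b)]
  have hB : G.IsPathWeightSum w B := fun i j p hp ↦ by ext a b; exact hD i j p hp a b
  have hblocks : (signedIncidence o fun j ↦ (S j)ᵀ)ᵀ * B * signedIncidence o S =
      (-2 : ℝ) • 1 := by
    ext j k : 1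
    rw [transpose_signedIncidence_mul_mul_signedIncidence_apply _ _ _ (hloop j) (hloop k)]
    rcases eq_or_ne j k with rfl | hjk
    · rw [hB.apply_self, hB.apply_self, hB.apply_of_adj (ho_adj j).symm, Sym2.eq_swap,
        hB.apply_of_adj (ho_adj j), hwW,
        show (0 : Matrix (Fin s) (Fin s) ℝ) - W j - (W j - 0) = (-2 : ℝ) • W j by module,
        Matrix.mul_smul, Matrix.smul_mul, (hW j).transpose_inv_sqrt_mul_mul_inv_sqrt,
        Matrix.smul_apply, one_apply_eq]
    · rw [hB.sub_eq_sub_of_adj hT (ho_adj j) (ho_adj k) (fun h ↦ hjk (ho_inj h)), sub_self,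
        mul_zero, zero_mul, Matrix.smul_apply, one_apply_ne hjk, smul_zero]
  rw [hQB, ← (comp _ _ _ _ ℝ).apply_symm_apply D, transpose_comp, transpose_map,
    signedIncidence_map_transpose, ← comp_mul, ← comp_mul, hblocks, ← comp_one]
  rfl

/-- Let `T` be a tree on `n` vertices whose edges `e₁, …, e_{n-1}` are assigned
`s × s` real positive definite matrix weights, let `D` be its distance matrix, and let `Q` be
the incidence matrix of `T` built from the inverses of the positive definite square roots of
the weights (with respect to a chosen orientation `o` enumerating the edges).  Then
`Qᵀ · D · Q = -2 I_{(n-1)s}`. -/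
theorem transpose_incidence_mul_dist_mul_incidence {n s : ℕ}
    (G : SimpleGraph (Fin n)) [DecidableRel G.Adj] (hT : G.IsTree)
    (o : Fin (n - 1) → Fin n × Fin n)
    (ho_adj : ∀ j, G.Adj (o j).1 (o j).2)
    (ho_inj : Function.Injective fun j => Sym2.mk (o j).1 (o j).2)
    (ho_surj : ∀ e ∈ G.edgeSet, ∃ j, Sym2.mk (o j).1 (o j).2 = e)
    (W : Fin (n - 1) → Matrix (Fin s) (Fin s) ℝ)
    (hW : ∀ j, (W j).PosDef)
    (w : Sym2 (Fin n) → Matrix (Fin s) (Fin s) ℝ)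
    (hwW : ∀ j, w (Sym2.mk (o j).1 (o j).2) = W j)
    (D : Matrix (Fin n × Fin s) (Fin n × Fin s) ℝ)
    (hD : ∀ (i j : Fin n) (p : G.Walk i j), p.IsPath →
      ∀ a b, D (i, a) (j, b) = ((p.edges.map w).sum) a b)
    (Q : Matrix (Fin n × Fin s) (Fin (n - 1) × Fin s) ℝ)
    (hQ : ∀ p q, Q p q =
      if p.1 = (o q.1).1 then ((CFC.sqrt (W q.1))⁻¹) p.2 q.2
      else if p.1 = (o q.1).2 then -(((CFC.sqrt (W q.1))⁻¹) p.2 q.2)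
      else 0) :
    Qᵀ * D * Q = (-2 : ℝ) • (1 : Matrix (Fin (n - 1) × Fin s) (Fin (n - 1) × Fin s) ℝ) :=
  transpose_incidence_mul_dist_mul_incidence_general G hT o ho_adj ho_inj W hW w hwW D hD Q hQ
end

section
/- Let T be a tree on n vertices whose edges are assigned s×s real positive definite matrix weights, let D be its distance matrix and L its Laplacian matrix formed from the inverses of the weights. Let μ_1 ≥ μ_2 ≥ … ≥ μ_s > 0 > μ_{s+1} ≥ … ≥ μ_{ns} be the eigenvalues of D and λ_1 ≥ λ_2 ≥ … ≥ λ_{ns−s} > λ_{ns−s+1} = … = λ_{ns} = 0 the eigenvalues of L. Then μ_{s+i} ≤ −2/λ_i ≤ μ_i for i = 1, 2, …, ns−s. -/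
/-!
For a tree, Bapat's identity `L D L = -2 L` holds: block row `i` of `L D` is `(2 - deg i) • 1`
off the diagonal and `-deg i • 1` on it, because along the path from `i` to `j` exactly one
neighbour of `i` is closer to `j`, and the block columns of `L` sum to zero. Hence on orthonormal
eigenvectors of `L` with eigenvalues `λ ≠ 0` the quadratic form of `D` is diagonal with values
`-2 / λ`. The interlacing is then a Courant–Fischer dimension count: the eigenvectors of `D` for
`μ₁, …, μ_{s+i}` and those of `L` for `λᵢ, …, λ_{ns-s}` span subspaces of dimensions adding up to
`ns + 1`, so they share a unit vector, on which the Rayleigh quotient of `D` is both `≥ μ_{s+i}`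
and `≤ -2 / λᵢ`. The other inequality is the same count with the roles exchanged.
-/

open Matrix

open Module
open scoped RealInnerProductSpace

theorem Submodule.exists_mem_inf_ne_zero_of_finrank_lt {K V : Type*} [DivisionRing K]
    [AddCommGroup V] [Module K V] [FiniteDimensional K V] {S T : Submodule K V}
    (h : finrank K V < finrank K S + finrank K T) : ∃ x ∈ S ⊓ T, x ≠ 0 := by
  by_contra! hST
  exact h.not_ge (finrank_add_finrank_le_of_disjoint
    (Submodule.disjoint_def.2 fun x hS hT => hST x ⟨hS, hT⟩))

section RayleighQuotient

variable {E : Type*} [NormedAddCommGroup E] [InnerProductSpace ℝ E]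

theorem Orthonormal.inner_sum_smul_map_sum_smul {κ : Type*} [Fintype κ] {v : κ → E}
    (hv : Orthonormal ℝ v) (A : E →L[ℝ] E) {θ : κ → ℝ}
    (hA : ∀ k l, ⟪v k, A (v l)⟫ = θ k * ⟪v k, v l⟫) (c : κ → ℝ) :
    ⟪∑ k, c k • v k, A (∑ k, c k • v k)⟫ = ∑ k, c k ^ 2 * θ k := by
  have hrow : ∀ k, ⟪v k, A (∑ l, c l • v l)⟫ = θ k * c k := by
    intro k
    simp_rw [map_sum, map_smul, inner_sum, real_inner_smul_right, hA, mul_left_comm _ (θ k),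
      ← Finset.mul_sum, ← real_inner_smul_right, ← inner_sum, hv.inner_right_fintype]
  simp_rw [sum_inner, real_inner_smul_left, hrow]
  exact Finset.sum_congr rfl fun k _ => by ring

theorem Orthonormal.exists_inner_map_self_eq_sum_of_mem_span {κ : Type*} [Fintype κ] {v : κ → E}
    (hv : Orthonormal ℝ v) (A : E →L[ℝ] E) {θ : κ → ℝ}
    (hA : ∀ k l, ⟪v k, A (v l)⟫ = θ k * ⟪v k, v l⟫) {x : E}
    (hx : x ∈ Submodule.span ℝ (Set.range v)) :
    ∃ c : κ → ℝ, ⟪x, A x⟫ = ∑ k, c k ^ 2 * θ k ∧ ‖x‖ ^ 2 = ∑ k, c k ^ 2 := by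
  obtain ⟨c, rfl⟩ := (Submodule.mem_span_range_iff_exists_fun ℝ).1 hx
  refine ⟨c, hv.inner_sum_smul_map_sum_smul A hA c, ?_⟩
  simpa [← real_inner_self_eq_norm_sq, sq] using hv.inner_sum c c Finset.univ

theorem le_of_orthonormal_of_finrank_lt_card_add_card [FiniteDimensional ℝ E]
    {κ₁ κ₂ : Type*} [Fintype κ₁] [Fintype κ₂] (A : E →L[ℝ] E)
    {v₁ : κ₁ → E} {v₂ : κ₂ → E} (hv₁ : Orthonormal ℝ v₁) (hv₂ : Orthonormal ℝ v₂)
    (hcard : finrank ℝ E < Fintype.card κ₁ + Fintype.card κ₂)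
    {θ₁ : κ₁ → ℝ} {θ₂ : κ₂ → ℝ}
    (hA₁ : ∀ k l, ⟪v₁ k, A (v₁ l)⟫ = θ₁ k * ⟪v₁ k, v₁ l⟫)
    (hA₂ : ∀ k l, ⟪v₂ k, A (v₂ l)⟫ = θ₂ k * ⟪v₂ k, v₂ l⟫)
    {r₁ r₂ : ℝ} (hr₁ : ∀ k, r₁ ≤ θ₁ k) (hr₂ : ∀ k, θ₂ k ≤ r₂) : r₁ ≤ r₂ := by
  obtain ⟨x, ⟨hx₁, hx₂⟩, hx⟩ := Submodule.exists_mem_inf_ne_zero_of_finrank_lt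
    (S := Submodule.span ℝ (Set.range v₁)) (T := Submodule.span ℝ (Set.range v₂)) (by
      rwa [finrank_span_eq_card hv₁.linearIndependent,
        finrank_span_eq_card hv₂.linearIndependent])
  obtain ⟨c, hAc, hc⟩ := hv₁.exists_inner_map_self_eq_sum_of_mem_span A hA₁ hx₁
  obtain ⟨d, hAd, hd⟩ := hv₂.exists_inner_map_self_eq_sum_of_mem_span A hA₂ hx₂
  have hpos : 0 < ‖x‖ ^ 2 := by positivity
  refine le_of_mul_le_mul_right ?_ hpos
  calc r₁ * ‖x‖ ^ 2 = ∑ k, c k ^ 2 * r₁ := by rw [hc, Finset.mul_sum]; simp_rw [mul_comm]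
    _ ≤ ⟪x, A x⟫ := hAc ▸ Finset.sum_le_sum fun k _ => by gcongr; exact hr₁ k
    _ ≤ ∑ k, d k ^ 2 * r₂ := hAd ▸ Finset.sum_le_sum fun k _ => by gcongr; exact hr₂ k
    _ = r₂ * ‖x‖ ^ 2 := by rw [hd, Finset.mul_sum]; simp_rw [mul_comm]

theorem le_of_orthonormal_of_antitone [FiniteDimensional ℝ E] (A : E →L[ℝ] E) {N₁ N₂ : ℕ}
    {u : Fin N₁ → E} {v : Fin N₂ → E} (hu : Orthonormal ℝ u) (hv : Orthonormal ℝ v)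
    {α : Fin N₁ → ℝ} {β : Fin N₂ → ℝ}
    (hAu : ∀ k l, ⟪u k, A (u l)⟫ = α k * ⟪u k, u l⟫)
    (hAv : ∀ k l, ⟪v k, A (v l)⟫ = β k * ⟪v k, v l⟫) (hα : Antitone α) (hβ : Antitone β)
    (p : Fin N₁) (q : Fin N₂) (hpq : finrank ℝ E < p + 1 + (N₂ - q)) : α p ≤ β q :=
  le_of_orthonormal_of_finrank_lt_card_add_card A
    (hu.comp ((↑) : Finset.Iic p → Fin N₁) Subtype.val_injective)
    (hv.comp ((↑) : Finset.Ici q → Fin N₂) Subtype.val_injective)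
    (by rwa [Fintype.card_coe, Fintype.card_coe, Fin.card_Iic, Fin.card_Ici])
    (fun k l => hAu k l) (fun k l => hAv k l)
    (fun k => hα (Finset.mem_Iic.1 k.2)) (fun k => hβ (Finset.mem_Ici.1 k.2))

theorem LinearMap.IsSymmetric.inner_map_eq_of_mul_mul_eq_smul {T A : E →L[ℝ] E}
    (hT : (T : E →ₗ[ℝ] E).IsSymmetric) {c : ℝ} (hTAT : T * A * T = c • T) {a b : ℝ} {v w : E}
    (hv : T v = a • v) (hw : T w = b • w) (ha : a ≠ 0) (hb : b ≠ 0) :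
    ⟪v, A w⟫ = c / a * ⟪v, w⟫ := by
  have key : a * b * ⟪v, A w⟫ = c * b * ⟪v, w⟫ :=
    calc a * b * ⟪v, A w⟫ = ⟪T v, A (T w)⟫ := by
          rw [hv, hw, map_smul, real_inner_smul_left, real_inner_smul_right]; ring
      _ = ⟪v, (T * A * T) w⟫ := hT _ _
      _ = c * b * ⟪v, w⟫ := by
          rw [hTAT, FunLike.coe_smul, Pi.smul_apply, hw, smul_smul, real_inner_smul_right]
  rw [div_mul_eq_mul_div, eq_div_iff ha]
  exact mul_left_cancel₀ hb (by linear_combination key)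

end RayleighQuotient

namespace SimpleGraph

variable {V m : Type*} {G : SimpleGraph V} {w : Sym2 V → Matrix m m ℝ}

def IsBlockDistMatrix (G : SimpleGraph V) (w : Sym2 V → Matrix m m ℝ)
    (Δ : Matrix V V (Matrix m m ℝ)) : Prop :=
  ∀ i j (p : G.Walk i j), p.IsPath → Δ i j = (p.edges.map w).sum

theorem Walk.IsPath.snd_mem_neighborFinset_iff [Fintype V] [DecidableRel G.Adj] {i j : V}
    {p : G.Walk i j} (hp : p.IsPath) : p.snd ∈ G.neighborFinset i ↔ i ≠ j := by
  rcases eq_or_ne i j with rfl | hij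
  · rw [Walk.isPath_iff_nil.1 hp |>.eq_nil]; simp
  · simp [hij, p.adj_snd (Walk.not_nil_of_ne hij)]

/-- When `i = j`, `p` is `nil` and `p.snd = i` is not a neighbour, so only the second case
occurs. -/
theorem IsBlockDistMatrix.sub_apply_of_adj [DecidableEq V] {Δ : Matrix V V (Matrix m m ℝ)}
    (hΔ : G.IsBlockDistMatrix w Δ) (hG : G.IsAcyclic) {i j t : V} {p : G.Walk i j}
    (hp : p.IsPath) (ht : G.Adj i t) :
    Δ i j - Δ t j = if t = p.snd then w s(i, t) else -w s(i, t) := by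
  by_cases hsnd : t = p.snd
  · cases p with
    | nil => exact absurd hsnd ht.ne'
    | cons h q =>
      rw [Walk.snd_cons] at hsnd
      subst hsnd
      rw [if_pos (Walk.snd_cons q h).symm, hΔ _ _ _ hp, hΔ _ _ q hp.of_cons, Walk.edges_cons,
        List.map_cons, List.sum_cons, add_sub_cancel_right]
  · have ht' : t ∉ p.support := fun h => hsnd (hG.eq_snd_of_adj_start hp ht h)
    rw [if_neg hsnd, hΔ _ _ _ hp, hΔ _ _ _ (hp.cons ht' (h := ht.symm)), Walk.edges_cons,
      List.map_cons, List.sum_cons, Sym2.eq_swap]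
    abel

variable [Fintype V] [DecidableEq V] [Fintype m] [DecidableEq m] [DecidableRel G.Adj]

noncomputable def blockLap (G : SimpleGraph V) [DecidableRel G.Adj] (w : Sym2 V → Matrix m m ℝ) :
    Matrix V V (Matrix m m ℝ) :=
  of fun i k => (if i = k then ∑ t ∈ G.neighborFinset i, (w s(i, t))⁻¹ else 0) -
    if G.Adj i k then (w s(i, k))⁻¹ else 0

theorem blockLap_mul_apply (X : Matrix V V (Matrix m m ℝ)) (i j : V) :
    (G.blockLap w * X) i j = ∑ t ∈ G.neighborFinset i, (w s(i, t))⁻¹ * (X i j - X t j) := by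
  simp only [blockLap, mul_apply, of_apply, sub_mul, ite_mul, zero_mul, Finset.sum_sub_distrib,
    Finset.sum_ite_eq, Finset.mem_univ, if_true, ← Finset.sum_filter, ← neighborFinset_eq_filter,
    Finset.sum_mul, mul_sub]

theorem sum_blockLap_apply (j : V) : ∑ k, G.blockLap w k j = 0 := by
  simp only [blockLap, of_apply, Finset.sum_sub_distrib, Finset.sum_ite_eq', Finset.mem_univ,
    if_true, ← Finset.sum_filter]
  rw [sub_eq_zero]
  refine Finset.sum_congr (by ext; simp [adj_comm]) fun k _ => by rw [Sym2.eq_swap]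

theorem IsBlockDistMatrix.blockLap_mul_apply_eq_smul_one {Δ : Matrix V V (Matrix m m ℝ)}
    (hΔ : G.IsBlockDistMatrix w Δ) (hG : G.IsTree) (hw : ∀ e ∈ G.edgeSet, IsUnit (w e))
    (i j : V) :
    (G.blockLap w * Δ) i j = ((2 - G.degree i : ℝ) - if i = j then 2 else 0) • 1 := by
  obtain ⟨p, hp, -⟩ := hG.existsUnique_path i j
  have hterm : ∀ t ∈ G.neighborFinset i,
      (w s(i, t))⁻¹ * (Δ i j - Δ t j) = (if t = p.snd then 1 else -1 : ℝ) • 1 := by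
    intro t ht
    have hadj := (G.mem_neighborFinset i t).1 ht
    have hinv : (w s(i, t))⁻¹ * w s(i, t) = 1 :=
      nonsing_inv_mul _ ((isUnit_iff_isUnit_det _).1 (hw _ hadj))
    rw [hΔ.sub_apply_of_adj hG.isAcyclic hp hadj]
    split_ifs
    · rw [hinv, one_smul]
    · rw [mul_neg, hinv, neg_smul, one_smul]
  rw [blockLap_mul_apply, Finset.sum_congr rfl hterm, ← Finset.sum_smul]
  congr 1
  have hsplit : ∀ t, (if t = p.snd then 1 else -1 : ℝ) = (if p.snd = t then 2 else 0) - 1 := by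
    intro t
    rcases eq_or_ne t p.snd with rfl | h
    · norm_num
    · rw [if_neg h, if_neg h.symm]; norm_num
  simp only [hsplit, Finset.sum_sub_distrib, Finset.sum_ite_eq, hp.snd_mem_neighborFinset_iff,
    Finset.sum_const, card_neighborFinset_eq_degree, nsmul_eq_mul, mul_one]
  by_cases hij : i = j <;> simp [hij]

theorem IsBlockDistMatrix.blockLap_mul_mul_blockLap {Δ : Matrix V V (Matrix m m ℝ)}
    (hΔ : G.IsBlockDistMatrix w Δ) (hG : G.IsTree) (hw : ∀ e ∈ G.edgeSet, IsUnit (w e)) :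
    G.blockLap w * Δ * G.blockLap w = (-2 : ℝ) • G.blockLap w := by
  ext1 i j
  calc (G.blockLap w * Δ * G.blockLap w) i j
      = ∑ k, ((2 - G.degree i : ℝ) - if i = k then 2 else 0) • G.blockLap w k j := by
        simp only [mul_apply (M := G.blockLap w * Δ), hΔ.blockLap_mul_apply_eq_smul_one hG hw,
          smul_mul_assoc, one_mul]
    _ = ∑ k, ((2 - G.degree i : ℝ) • G.blockLap w k j -
          if i = k then (2 : ℝ) • G.blockLap w k j else 0) := by
        simp only [sub_smul, ite_smul, zero_smul]
    _ = ((-2 : ℝ) • G.blockLap w) i j := by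
        rw [Finset.sum_sub_distrib, ← Finset.smul_sum, sum_blockLap_apply, smul_zero,
          Finset.sum_ite_eq, if_pos (Finset.mem_univ _), zero_sub, Matrix.smul_apply, neg_smul]

end SimpleGraph

theorem Matrix.IsHermitian.toEuclideanCLM_eigenvectorBasis {ι : Type*} [Fintype ι]
    [DecidableEq ι] {M : Matrix ι ι ℝ} (hM : M.IsHermitian) (j : ι) :
    toEuclideanCLM (𝕜 := ℝ) M (hM.eigenvectorBasis j) =
      hM.eigenvalues j • hM.eigenvectorBasis j :=
  WithLp.ofLp_injective 2 (hM.mulVec_eigenvectorBasis j)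

theorem Matrix.IsHermitian.isSymmetric_toEuclideanCLM {ι : Type*} [Fintype ι] [DecidableEq ι]
    {M : Matrix ι ι ℝ} (hM : M.IsHermitian) :
    (toEuclideanCLM (𝕜 := ℝ) M : EuclideanSpace ℝ ι →ₗ[ℝ] EuclideanSpace ℝ ι).IsSymmetric :=
  isSymmetric_toEuclideanLin_iff.mpr hM

theorem Matrix.IsHermitian.inner_eigenvectorBasis_toEuclideanCLM {ι : Type*} [Fintype ι]
    [DecidableEq ι] {M : Matrix ι ι ℝ} (hM : M.IsHermitian) (j : ι) (x : EuclideanSpace ℝ ι) :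
    ⟪hM.eigenvectorBasis j, toEuclideanCLM (𝕜 := ℝ) M x⟫ =
      hM.eigenvalues j * ⟪hM.eigenvectorBasis j, x⟫ :=
  calc _ = ⟪toEuclideanCLM (𝕜 := ℝ) M (hM.eigenvectorBasis j), x⟫ :=
        (hM.isSymmetric_toEuclideanCLM _ _).symm
    _ = _ := by rw [hM.toEuclideanCLM_eigenvectorBasis, real_inner_smul_left]

theorem comp_blockLap {n s : ℕ} (G : SimpleGraph (Fin n)) [DecidableRel G.Adj]
    (w : Sym2 (Fin n) → Matrix (Fin s) (Fin s) ℝ) :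
    comp _ _ _ _ ℝ (G.blockLap w) = matLap G w := by
  ext ⟨i, a⟩ ⟨k, c⟩
  rcases eq_or_ne i k with rfl | hik
  · simp [SimpleGraph.blockLap, matLap]
  · by_cases hadj : G.Adj i k <;> simp [SimpleGraph.blockLap, matLap, hik, hadj]

theorem matLap_mul_mul_matLap {n s : ℕ} {G : SimpleGraph (Fin n)} [DecidableRel G.Adj]
    (hT : G.IsTree) {w : Sym2 (Fin n) → Matrix (Fin s) (Fin s) ℝ}
    (hw : ∀ e ∈ G.edgeSet, (w e).PosDef) {D : Matrix (Fin n × Fin s) (Fin n × Fin s) ℝ}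
    (hD : ∀ (i j : Fin n) (p : G.Walk i j), p.IsPath →
      ∀ a b, D (i, a) (j, b) = ((p.edges.map w).sum) a b) :
    matLap G w * D * matLap G w = (-2 : ℝ) • matLap G w := by
  have hΔ : G.IsBlockDistMatrix w ((comp _ _ _ _ ℝ).symm D) :=
    fun i j p hp => by ext a b; exact hD i j p hp a b
  have := congrArg (compAlgEquiv (Fin n) (Fin s) ℝ ℝ)
    (hΔ.blockLap_mul_mul_blockLap hT fun e he => (hw e he).isUnit)
  simpa only [map_mul, map_smul, compAlgEquiv_apply, comp_blockLap, Equiv.apply_symm_apply]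
    using this

/-- Let `T` be a tree on `n` vertices with `s × s` real positive definite matrix
weights, `D` its distance matrix and `L` its Laplacian formed from the inverses of the weights.
Let `μ₁ ≥ ⋯ ≥ μ_s > 0 > μ_{s+1} ≥ ⋯ ≥ μ_{ns}` be the eigenvalues of `D` and
`λ₁ ≥ ⋯ ≥ λ_{ns-s} > λ_{ns-s+1} = ⋯ = λ_{ns} = 0` the eigenvalues of `L` (both listed in
nonincreasing order with multiplicity).  Then `μ_{s+i} ≤ -2/λᵢ ≤ μᵢ` for `i = 1, …, ns-s`.
(Here `μ` and `lam` are `0`-indexed, so `μᵢ` of the paper is `μ ⟨i-1, _⟩`.) -/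
theorem distance_lap_eigenvalue_interlacing {n s : ℕ} (hn : 1 ≤ n)
    (G : SimpleGraph (Fin n)) [DecidableRel G.Adj] (hT : G.IsTree)
    (w : Sym2 (Fin n) → Matrix (Fin s) (Fin s) ℝ)
    (hw : ∀ e ∈ G.edgeSet, (w e).PosDef)
    (D : Matrix (Fin n × Fin s) (Fin n × Fin s) ℝ)
    (hD : ∀ (i j : Fin n) (p : G.Walk i j), p.IsPath →
      ∀ a b, D (i, a) (j, b) = ((p.edges.map w).sum) a b)
    (hDh : D.IsHermitian) (hLh : (matLap G w).IsHermitian)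
    (μ lam : Fin (n * s) → ℝ) (hμa : Antitone μ) (hlama : Antitone lam)
    (hμ : ∃ σ : Fin (n * s) ≃ Fin n × Fin s, ∀ k, μ k = hDh.eigenvalues (σ k))
    (hlam : ∃ σ : Fin (n * s) ≃ Fin n × Fin s, ∀ k, lam k = hLh.eigenvalues (σ k))
    (hlampos : ∀ k : Fin (n * s), (k : ℕ) < n * s - s → 0 < lam k) :
    ∀ i : ℕ, (hi : i < n * s - s) →
      μ ⟨s + i, by have h := Nat.le_mul_of_pos_left s hn; omega⟩ ≤
          -2 / lam ⟨i, by omega⟩ ∧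
        -2 / lam ⟨i, by omega⟩ ≤ μ ⟨i, by omega⟩ := by
  intro i hi
  obtain ⟨σD, hσD⟩ := hμ
  obtain ⟨σL, hσL⟩ := hlam
  let A := toEuclideanCLM (𝕜 := ℝ) D
  let ι : Fin (n * s - s) → Fin (n * s) := Fin.castLE (Nat.sub_le _ _)
  let g k := hDh.eigenvectorBasis (σD k)
  let f k := hLh.eigenvectorBasis (σL (ι k))
  have hg : Orthonormal ℝ g := hDh.eigenvectorBasis.orthonormal.comp σD σD.injective
  have hf : Orthonormal ℝ f :=
    hLh.eigenvectorBasis.orthonormal.comp (σL ∘ ι) (σL.injective.comp (Fin.castLE_injective _))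
  have hAg : ∀ k l, ⟪g k, A (g l)⟫ = μ k * ⟪g k, g l⟫ := fun k l => by
    rw [hσD]; exact hDh.inner_eigenvectorBasis_toEuclideanCLM _ _
  have hAf : ∀ k l, ⟪f k, A (f l)⟫ = -2 / lam (ι k) * ⟪f k, f l⟫ := fun k l =>
    hLh.isSymmetric_toEuclideanCLM.inner_map_eq_of_mul_mul_eq_smul
      (by rw [← map_mul, ← map_mul, matLap_mul_mul_matLap hT hw hD, map_smul])
      (by rw [hσL]; exact hLh.toEuclideanCLM_eigenvectorBasis _)
      (by rw [hσL]; exact hLh.toEuclideanCLM_eigenvectorBasis _)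
      (hlampos _ k.2).ne' (hlampos _ l.2).ne'
  have hθ : Antitone fun k => -2 / lam (ι k) := fun k l hkl => by
    dsimp only
    rw [neg_div, neg_div, neg_le_neg_iff]
    exact div_le_div_of_nonneg_left zero_le_two (hlampos _ l.2) (hlama hkl)
  have hdim : finrank ℝ (EuclideanSpace ℝ (Fin n × Fin s)) = n * s := by simp
  exact ⟨le_of_orthonormal_of_antitone A hg hf hAg hAf hμa hθ _ ⟨i, hi⟩
      (by simp only [hdim]; omega),
    le_of_orthonormal_of_antitone A hf hg hAf hAg hθ hμa ⟨i, hi⟩ _ (by simp only [hdim]; omega)⟩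
end

section
/- Let T be a tree on n vertices with positive real number edge weights, let D be its distance matrix, and let L be the Laplacian matrix of T obtained by replacing each edge weight by its reciprocal. Let μ_1 > 0 > μ_2 ≥ … ≥ μ_n be the eigenvalues of D and λ_1 ≥ λ_2 ≥ … ≥ λ_{n−1} > λ_n = 0 the eigenvalues of L. Then 0 > −2/λ_1 ≥ μ_2 ≥ −2/λ_2 ≥ μ_3 ≥ … ≥ −2/λ_{n−1} ≥ μ_n. -/
/-!
On a tree, the Laplacian `L` with conductances `1 / w` and the distance matrix `D` satisfy
`L * D * L = -2 • L`: of the neighbours of `i`, exactly one is closer to `j` (none if `i = j`), so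
`(L * D) i j = 2 - deg i - 2 δᵢⱼ`, and the columns of `L` sum to zero. Hence, for orthonormal
eigenvectors `v₁, …, v_{n-1}` of `L` with positive eigenvalues `λ₁, …, λ_{n-1}`, one gets
`⟪vₖ, D vₗ⟫ = -2 / λₖ · δₖₗ`: the numbers `-2 / λₖ` are the eigenvalues of the compression of `D`
to the hyperplane spanned by the `vₖ`, and Cauchy interlacing (by the Courant–Fischer dimension
count) interlaces them with the eigenvalues of `D`.
-/

open Matrix Module Submodule Finset
open scoped RealInnerProductSpace

section Rayleigh

variable {E : Type*} [NormedAddCommGroup E] [InnerProductSpace ℝ E] {ι κ : Type*}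

theorem Orthonormal.inner_sum_smul_map_sum_smul_s18 {u : ι → E} (hu : Orthonormal ℝ u)
    {T : E →ₗ[ℝ] E} {μ : ι → ℝ} (hTu : ∀ i j, ⟪u i, T (u j)⟫ = μ i * ⟪u i, u j⟫)
    (s : Finset ι) (c : ι → ℝ) :
    ⟪∑ i ∈ s, c i • u i, T (∑ i ∈ s, c i • u i)⟫ = ∑ i ∈ s, μ i * c i ^ 2 := by
  have hT : ∀ i ∈ s, ⟪u i, T (∑ j ∈ s, c j • u j)⟫ = μ i * c i := fun i hi => by
    simp_rw [map_sum, map_smul, inner_sum, real_inner_smul_right, hTu, mul_left_comm _ (μ i),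
      ← Finset.mul_sum, ← real_inner_smul_right, ← inner_sum, hu.inner_right_sum c hi]
  rw [sum_inner]
  refine Finset.sum_congr rfl fun i hi => ?_
  rw [real_inner_smul_left, hT i hi]
  ring

theorem Orthonormal.le_inner_map_self_of_mem_span {u : ι → E} (hu : Orthonormal ℝ u)
    {T : E →ₗ[ℝ] E} {μ : ι → ℝ} (hTu : ∀ i j, ⟪u i, T (u j)⟫ = μ i * ⟪u i, u j⟫)
    {s : Finset ι} {a : ℝ} (ha : ∀ i ∈ s, a ≤ μ i) {x : E} (hx : x ∈ span ℝ (u '' s)) :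
    a * ‖x‖ ^ 2 ≤ ⟪x, T x⟫ := by
  obtain ⟨c, rfl⟩ := (mem_span_image_finset_iff_exists_fun' ℝ).1 hx
  rw [← real_inner_self_eq_norm_sq, hu.inner_sum, hu.inner_sum_smul_map_sum_smul_s18 hTu,
    Finset.mul_sum]
  refine Finset.sum_le_sum fun i hi => ?_
  rw [conj_trivial, ← sq]
  exact mul_le_mul_of_nonneg_right (ha i hi) (sq_nonneg (c i))

theorem Orthonormal.inner_map_self_le_of_mem_span {u : ι → E} (hu : Orthonormal ℝ u)
    {T : E →ₗ[ℝ] E} {μ : ι → ℝ} (hTu : ∀ i j, ⟪u i, T (u j)⟫ = μ i * ⟪u i, u j⟫)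
    {s : Finset ι} {b : ℝ} (hb : ∀ i ∈ s, μ i ≤ b) {x : E} (hx : x ∈ span ℝ (u '' s)) :
    ⟪x, T x⟫ ≤ b * ‖x‖ ^ 2 := by
  have := hu.le_inner_map_self_of_mem_span (T := -T) (μ := -μ)
    (fun i j => by simp [hTu]) (a := -b) (fun i hi => neg_le_neg (hb i hi)) hx
  simpa using this

theorem Orthonormal.finrank_span_image {u : ι → E} (hu : Orthonormal ℝ u) (s : Finset ι) :
    finrank ℝ (span ℝ (u '' s)) = #s := by
  rw [Set.image_eq_range]
  exact (finrank_span_eq_card (hu.linearIndependent.comp _ Subtype.val_injective)).trans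
    (by simp)

theorem le_of_finrank_lt_finrank_add_finrank [FiniteDimensional ℝ E] {S U : Submodule ℝ E}
    (h : finrank ℝ E < finrank ℝ S + finrank ℝ U) {Q : E → ℝ} {a b : ℝ}
    (hS : ∀ x ∈ S, a * ‖x‖ ^ 2 ≤ Q x) (hU : ∀ x ∈ U, Q x ≤ b * ‖x‖ ^ 2) : a ≤ b := by
  obtain ⟨x, hxS, hxU, hx⟩ : ∃ x ∈ S, x ∈ U ∧ x ≠ 0 := by
    by_contra! hdisj
    exact h.not_ge (finrank_add_finrank_le_of_disjoint (disjoint_def.2 hdisj))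
  exact le_of_mul_le_mul_right ((hS x hxS).trans (hU x hxU)) (by positivity)

theorem Orthonormal.le_of_finrank_lt_card_add_card [FiniteDimensional ℝ E] {T : E →ₗ[ℝ] E}
    {u : ι → E} {μ : ι → ℝ} (hu : Orthonormal ℝ u) (hTu : ∀ i j, ⟪u i, T (u j)⟫ = μ i * ⟪u i, u j⟫)
    {v : κ → E} {ν : κ → ℝ} (hv : Orthonormal ℝ v) (hTv : ∀ i j, ⟪v i, T (v j)⟫ = ν i * ⟪v i, v j⟫)
    {s : Finset ι} {t : Finset κ} (hst : finrank ℝ E < #s + #t) {a b : ℝ}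
    (ha : ∀ i ∈ s, a ≤ μ i) (hb : ∀ j ∈ t, ν j ≤ b) : a ≤ b :=
  le_of_finrank_lt_finrank_add_finrank (S := span ℝ (u '' s)) (U := span ℝ (v '' t))
    (by rwa [hu.finrank_span_image, hv.finrank_span_image])
    (fun _ hx => hu.le_inner_map_self_of_mem_span hTu ha hx)
    (fun _ hx => hv.inner_map_self_le_of_mem_span hTv hb hx)

theorem Orthonormal.cauchy_interlacing [FiniteDimensional ℝ E] {T : E →ₗ[ℝ] E} {n m : ℕ}
    (hE : finrank ℝ E = n)
    {u : Fin n → E} {μ : Fin n → ℝ} (hu : Orthonormal ℝ u)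
    (hTu : ∀ i j, ⟪u i, T (u j)⟫ = μ i * ⟪u i, u j⟫) (hμ : Antitone μ)
    {v : Fin m → E} {ν : Fin m → ℝ} (hv : Orthonormal ℝ v)
    (hTv : ∀ i j, ⟪v i, T (v j)⟫ = ν i * ⟪v i, v j⟫) (hν : Antitone ν) (i : Fin m) (j : Fin n) :
    ((j : ℕ) ≤ i → ν i ≤ μ j) ∧ ((i : ℕ) + (n - m) ≤ j → μ j ≤ ν i) := by
  constructor <;> intro hij
  · refine hv.le_of_finrank_lt_card_add_card hTv hu hTu (s := Iic i) (t := Ici j) ?_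
      (fun k hk => hν (mem_Iic.1 hk)) (fun k hk => hμ (mem_Ici.1 hk))
    rw [Fin.card_Iic, Fin.card_Ici]
    omega
  · refine hu.le_of_finrank_lt_card_add_card hTu hv hTv (s := Iic j) (t := Ici i) ?_
      (fun k hk => hμ (mem_Iic.1 hk)) (fun k hk => hν (mem_Ici.1 hk))
    rw [Fin.card_Iic, Fin.card_Ici]
    omega

theorem LinearMap.IsSymmetric.inner_map_eq_div_mul_inner {S T : E →ₗ[ℝ] E} (hS : S.IsSymmetric)
    {c : ℝ} (hSTS : ∀ z, S (T (S z)) = c • S z) {x y : E} {α β : ℝ} (hx : S x = α • x)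
    (hy : S y = β • y) (hα : α ≠ 0) (hβ : β ≠ 0) : ⟪x, T y⟫ = c / α * ⟪x, y⟫ := by
  have h : α * β * ⟪x, T y⟫ = c * β * ⟪x, y⟫ := calc
    α * β * ⟪x, T y⟫ = ⟪S x, T (S y)⟫ := by
      rw [hx, hy, map_smul, real_inner_smul_left, real_inner_smul_right]; ring
    _ = ⟪x, S (T (S y))⟫ := hS _ _
    _ = c * β * ⟪x, y⟫ := by rw [hSTS, hy, smul_smul, real_inner_smul_right]
  rw [div_mul_eq_mul_div, eq_div_iff hα]
  apply mul_left_cancel₀ hβ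
  linear_combination h

end Rayleigh

theorem Matrix.IsHermitian.exists_orthonormal_eigenvectors {m : Type*} [Fintype m] [DecidableEq m]
    {A : Matrix m m ℝ} (hA : A.IsHermitian) {μ : m → ℝ}
    (hμ : ∃ σ : m ≃ m, ∀ k, μ k = hA.eigenvalues (σ k)) :
    ∃ u : m → EuclideanSpace ℝ m, Orthonormal ℝ u ∧ ∀ k, toEuclideanLin A (u k) = μ k • u k := by
  obtain ⟨σ, hσ⟩ := hμ
  refine ⟨hA.eigenvectorBasis ∘ σ, hA.eigenvectorBasis.orthonormal.comp σ σ.injective,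
    fun k => ?_⟩
  rw [hσ k]
  exact WithLp.ofLp_injective 2 (hA.mulVec_eigenvectorBasis (σ k))

theorem Matrix.IsHermitian.sum_eq_trace {m : Type*} [Fintype m] [DecidableEq m]
    {A : Matrix m m ℝ} (hA : A.IsHermitian) {μ : m → ℝ}
    (hμ : ∃ σ : m ≃ m, ∀ k, μ k = hA.eigenvalues (σ k)) : ∑ k, μ k = A.trace := by
  obtain ⟨σ, hσ⟩ := hμ
  simp_rw [hσ, Equiv.sum_comp σ hA.eigenvalues, hA.trace_eq_sum_eigenvalues]
  rfl

namespace SimpleGraph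

variable {V : Type*} {G : SimpleGraph V}

variable (G) in
/-- On a tree, where paths are unique, this says that `D` is the weighted distance matrix. -/
def IsPathWeightMatrix (w : Sym2 V → ℝ) (D : Matrix V V ℝ) : Prop :=
  ∀ (i j : V) (p : G.Walk i j), p.IsPath → D i j = (p.edges.map w).sum

namespace IsPathWeightMatrix

variable {w : Sym2 V → ℝ} {D : Matrix V V ℝ}

theorem apply_self (hD : G.IsPathWeightMatrix w D) (i : V) : D i i = 0 := by
  simpa using hD i i .nil .nil

theorem apply_eq_add_of_notMem_support (hD : G.IsPathWeightMatrix w D)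
    {i j k : V} {p : G.Walk i j} (hp : p.IsPath) (hk : G.Adj i k) (hkp : k ∉ p.support) :
    D k j = w s(i, k) + D i j := by
  rw [hD _ _ _ (hp.cons hkp (h := hk.symm)), hD _ _ p hp, Walk.edges_cons, List.map_cons,
    List.sum_cons, Sym2.eq_swap]

theorem exists_adj_apply_eq_add (hD : G.IsPathWeightMatrix w D) (hT : G.IsTree) {i j : V}
    (hij : i ≠ j) :
    ∃ s, G.Adj i s ∧ D i j = w s(i, s) + D s j ∧
      ∀ k, G.Adj i k → k ≠ s → D k j = w s(i, k) + D i j := by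
  obtain ⟨p, hp, -⟩ := hT.existsUnique_path i j
  obtain ⟨s, his, q, rfl⟩ := Walk.not_nil_iff.1 (Walk.not_nil_of_ne hij (p := p))
  refine ⟨s, his, ?_, fun k hk hks => hD.apply_eq_add_of_notMem_support hp hk fun hkp => hks ?_⟩
  · rw [hD _ _ _ hp, hD _ _ q hp.of_cons, Walk.edges_cons, List.map_cons, List.sum_cons]
  · simpa using hT.isAcyclic.eq_snd_of_adj_start hp hk hkp

end IsPathWeightMatrix

variable [Fintype V] [DecidableEq V] [DecidableRel G.Adj]

variable (G) in
def weightedLapMatrix (c : Sym2 V → ℝ) : Matrix V V ℝ :=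
  Matrix.of fun i j =>
    if i = j then ∑ k ∈ G.neighborFinset i, c s(i, k) else if G.Adj i j then -c s(i, j) else 0

variable {c : Sym2 V → ℝ}

theorem weightedLapMatrix_apply_eq_sub (i j : V) :
    G.weightedLapMatrix c i j =
      (if i = j then ∑ k ∈ G.neighborFinset i, c s(i, k) else 0) -
        if G.Adj i j then c s(i, j) else 0 := by
  by_cases hij : i = j
  · subst hij
    simp [weightedLapMatrix]
  · by_cases hadj : G.Adj i j <;> simp [weightedLapMatrix, hij, hadj]

theorem weightedLapMatrix_mul_apply (M : Matrix V V ℝ) (i j : V) :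
    (G.weightedLapMatrix c * M) i j = ∑ k ∈ G.neighborFinset i, c s(i, k) * (M i j - M k j) := by
  simp_rw [Matrix.mul_apply, weightedLapMatrix_apply_eq_sub, sub_mul, sum_sub_distrib, ite_mul,
    zero_mul, sum_ite_eq, mem_univ, if_true, ← sum_filter, ← neighborFinset_eq_filter, sum_mul,
    mul_sub, sum_sub_distrib]

theorem sum_weightedLapMatrix_apply (j : V) : ∑ i, G.weightedLapMatrix c i j = 0 := by
  simp_rw [weightedLapMatrix_apply_eq_sub, sum_sub_distrib, sum_ite_eq', mem_univ, if_true,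
    ← sum_filter, G.adj_comm _ j, ← neighborFinset_eq_filter, Sym2.eq_swap, sub_self]

namespace IsPathWeightMatrix

variable {w : Sym2 V → ℝ} {D : Matrix V V ℝ}

theorem weightedLapMatrix_inv_mul_apply (hD : G.IsPathWeightMatrix w D) (hT : G.IsTree)
    (hw : ∀ e ∈ G.edgeSet, w e ≠ 0) (i j : V) :
    (G.weightedLapMatrix (fun e => (w e)⁻¹) * D) i j =
      2 - G.degree i - if i = j then 2 else 0 := by
  have hterm : ∀ k ∈ G.neighborFinset i, ∀ δ : ℝ, D i j - D k j = δ * w s(i, k) →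
      (w s(i, k))⁻¹ * (D i j - D k j) = δ := fun k hk δ h => by
    rw [h, mul_comm δ, inv_mul_cancel_left₀ (hw _ ((mem_neighborFinset _ _ _).1 hk))]
  rw [weightedLapMatrix_mul_apply]
  by_cases hij : i = j
  · subst hij
    rw [sum_congr rfl fun k hk => hterm k hk (-1) ?_, sum_const, card_neighborFinset_eq_degree,
      if_pos rfl, nsmul_eq_mul]
    · ring
    · have hik := (mem_neighborFinset _ _ _).1 hk
      rw [hD.apply_eq_add_of_notMem_support .nil hik (by simpa using hik.ne'), hD.apply_self]
      ring
  · obtain ⟨s, his, hs, hother⟩ := hD.exists_adj_apply_eq_add hT hij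
    rw [sum_congr rfl fun k hk => hterm k hk ((if k = s then 2 else 0) - 1) ?_, sum_sub_distrib,
      sum_ite_eq', if_pos ((mem_neighborFinset _ _ _).2 his), sum_const,
      card_neighborFinset_eq_degree, if_neg hij, nsmul_eq_mul]
    · ring
    · split_ifs with hks
      · rw [hks, hs]
        ring
      · rw [hother k ((mem_neighborFinset _ _ _).1 hk) hks]
        ring

theorem weightedLapMatrix_inv_mul_mul (hD : G.IsPathWeightMatrix w D) (hT : G.IsTree)
    (hw : ∀ e ∈ G.edgeSet, w e ≠ 0) :
    G.weightedLapMatrix (fun e => (w e)⁻¹) * D * G.weightedLapMatrix (fun e => (w e)⁻¹) =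
      (-2 : ℝ) • G.weightedLapMatrix (fun e => (w e)⁻¹) := by
  ext i j
  simp_rw [Matrix.mul_apply (M := _ * D), hD.weightedLapMatrix_inv_mul_apply hT hw, sub_mul,
    sum_sub_distrib, ← mul_sum, sum_weightedLapMatrix_apply, ite_mul, zero_mul, sum_ite_eq,
    mem_univ, if_true, Matrix.smul_apply, smul_eq_mul]
  ring

end IsPathWeightMatrix

end SimpleGraph

/-- Let `T` be a tree on `n` vertices with positive real edge weights, `D` its
distance matrix and `L` the Laplacian obtained by replacing each weight by its reciprocal.
Let `μ₁ > 0 > μ₂ ≥ ⋯ ≥ μₙ` be the eigenvalues of `D` and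
`λ₁ ≥ ⋯ ≥ λ_{n-1} > λₙ = 0` the eigenvalues of `L` (listed in nonincreasing order with
multiplicity).  Then `0 > -2/λ₁ ≥ μ₂ ≥ -2/λ₂ ≥ μ₃ ≥ ⋯ ≥ -2/λ_{n-1} ≥ μₙ`.
(Here `μ` and `lam` are `0`-indexed, so `μᵢ` of the paper is `μ ⟨i-1, _⟩`.) -/
theorem scalar_distance_lap_eigenvalue_interlacing {n : ℕ} (hn : 1 ≤ n)
    (G : SimpleGraph (Fin n)) [DecidableRel G.Adj] (hT : G.IsTree)
    (w : Sym2 (Fin n) → ℝ)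
    (hw : ∀ e ∈ G.edgeSet, 0 < w e)
    (D : Matrix (Fin n) (Fin n) ℝ)
    (hD : ∀ (i j : Fin n) (p : G.Walk i j), p.IsPath → D i j = (p.edges.map w).sum)
    (L : Matrix (Fin n) (Fin n) ℝ)
    (hL : ∀ i j, L i j =
      if i = j then ∑ k ∈ G.neighborFinset i, (w s(i, k))⁻¹
      else if G.Adj i j then -(w s(i, j))⁻¹
      else 0)
    (hDh : D.IsHermitian) (hLh : L.IsHermitian)
    (μ lam : Fin n → ℝ) (hμa : Antitone μ) (hlama : Antitone lam)
    (hμ : ∃ σ : Fin n ≃ Fin n, ∀ k, μ k = hDh.eigenvalues (σ k))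
    (hlam : ∃ σ : Fin n ≃ Fin n, ∀ k, lam k = hLh.eigenvalues (σ k))
    (hμpos : 0 < μ ⟨0, hn⟩)
    (hlampos : ∀ k : Fin n, (k : ℕ) < n - 1 → 0 < lam k) :
    -2 / lam ⟨0, hn⟩ < 0 ∧
      (∀ i : ℕ, (hi : i < n - 1) → μ ⟨i + 1, by omega⟩ ≤ -2 / lam ⟨i, by omega⟩) ∧
      (∀ i : ℕ, 1 ≤ i → (hi : i < n - 1) → -2 / lam ⟨i, by omega⟩ ≤ μ ⟨i, by omega⟩) := by
  have hD : G.IsPathWeightMatrix w D := hD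
  have hn2 : 2 ≤ n := by
    by_contra! h
    obtain rfl : n = 1 := by omega
    have htr := hDh.sum_eq_trace hμ
    rw [Fin.sum_univ_one, Matrix.trace_fin_one, hD.apply_self] at htr
    exact hμpos.ne' htr
  have hLDL : ∀ z, toEuclideanLin L (toEuclideanLin D (toEuclideanLin L z)) =
      (-2 : ℝ) • toEuclideanLin L z := by
    obtain rfl : L = G.weightedLapMatrix fun e => (w e)⁻¹ := Matrix.ext hL
    have := hD.weightedLapMatrix_inv_mul_mul hT fun e he => (hw e he).ne'
    exact fun z => by simpa using congr(toEuclideanLin $this z)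
  obtain ⟨u, hu, hDu⟩ := hDh.exists_orthonormal_eigenvectors hμ
  obtain ⟨v, hv, hLv⟩ := hLh.exists_orthonormal_eigenvectors hlam
  let ι : Fin (n - 1) → Fin n := Fin.castLE (Nat.sub_le n 1)
  have hpos : ∀ k, 0 < lam (ι k) := fun k => hlampos _ k.2
  have key := hu.cauchy_interlacing finrank_euclideanSpace_fin
    (fun i j => by rw [← isSymmetric_toEuclideanLin_iff.2 hDh, hDu, real_inner_smul_left]) hμa
    (hv.comp ι (Fin.castLE_injective _))
    (fun k l => (isSymmetric_toEuclideanLin_iff.2 hLh).inner_map_eq_div_mul_inner hLDL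
      (hLv _) (hLv _) (hpos k).ne' (hpos l).ne')
    (fun a b hab => by
      rw [div_le_div_iff₀ (hpos b) (hpos a)]
      linarith [hlama (show ι a ≤ ι b from hab)])
  refine ⟨div_neg_of_neg_of_pos (by norm_num) (hpos ⟨0, by omega⟩),
    fun i hi => (key ⟨i, hi⟩ ⟨i + 1, by omega⟩).2 (by simp; omega),
    fun i _ hi => (key ⟨i, hi⟩ ⟨i, by omega⟩).1 le_rfl⟩
end
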